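/- arXiv:2010.04135 — 8 statements merged into one kernel-verified Lean document; each statement's English description precedes it below -/
import Mathlib

section
/- Let K ⊆ B_d be a compact subset of the closed unit ball in ℝ^d and n a positive integer such that μ(K ∩ S^{d-1}) < 1/n. Then there exists δ > 0 such that for every set L of at most n points on the unit sphere S^{d-1}, there exists A ∈ O(d) with dist(L, A·K) ≥ δ, where dist denotes the minimum Euclidean distance between a point of L and a point of A·K. -/
/-!
Let `ν` be the Haar probability measure on `O(d)`. Since `μ` is `O(d)`-invariant and concentrated
on the sphere, on which `O(d)` acts transitively, Fubini gives `ν {A | A⁻¹ x ∈ K} = μ K < 1 / n`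
for every unit vector `x`, so by a union bound some `A` moves `K` off any `n` given unit vectors.
Missing `A • K` is an open condition on the `n`-tuple, and the Lebesgue number lemma on the
compact set `(S^{d-1})^n` turns this into a uniform positive distance `δ`.
-/

open MeasureTheory Metric Set MulAction
open scoped Pointwise

namespace Matrix

variable {𝕜 n : Type*} [RCLike 𝕜] [Fintype n] [DecidableEq n]

theorem isCompact_unitaryGroup : IsCompact (unitaryGroup n 𝕜 : Set (Matrix n n 𝕜)) :=
  (isCompact_univ_pi fun _ => isCompact_univ_pi fun _ => isCompact_closedBall (0 : 𝕜) 1)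
    |>.of_isClosed_subset (isClosed_unitary (R := Matrix n n 𝕜)) fun _ hU i _ j _ =>
      mem_closedBall_zero_iff.2 (entry_norm_bound_of_unitary hU i j)

instance : CompactSpace (unitaryGroup n 𝕜) :=
  isCompact_iff_compactSpace.1 isCompact_unitaryGroup

instance : MeasurableSpace (unitaryGroup n 𝕜) := borel _

instance : BorelSpace (unitaryGroup n 𝕜) := ⟨rfl⟩

-- A standalone `SMul` instance lets `ContinuousSMul` be found whichever `Monoid` structure on the
-- unitary group (submonoid or group) a `MulAction` is later elaborated against.
instance : SMul (unitaryGroup n 𝕜) (EuclideanSpace 𝕜 n) where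
  smul A x := toEuclideanLin (A : Matrix n n 𝕜) x

instance : MulAction (unitaryGroup n 𝕜) (EuclideanSpace 𝕜 n) where
  one_smul x := by change toEuclideanLin 1 x = x; simp
  mul_smul A B x := by
    change toEuclideanLin (A.1 * B.1) x = toEuclideanLin A.1 (toEuclideanLin B.1 x)
    simp

theorem unitaryGroup.smul_def (A : unitaryGroup n 𝕜) (x : EuclideanSpace 𝕜 n) :
    A • x = toEuclideanLin (A : Matrix n n 𝕜) x :=
  rfl

instance : ContinuousSMul (unitaryGroup n 𝕜) (EuclideanSpace 𝕜 n) where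
  continuous_smul := by
    simp only [unitaryGroup.smul_def, toLpLin_apply]
    fun_prop

theorem smulInvariantMeasure_of_map_toEuclideanLin_eq {μ : Measure (EuclideanSpace 𝕜 n)}
    (h : ∀ A ∈ unitaryGroup n 𝕜, μ.map (toEuclideanLin A) = μ) :
    SMulInvariantMeasure (unitaryGroup n 𝕜) (EuclideanSpace 𝕜 n) μ where
  measure_preimage_smul A s hs := by
    rw [← Measure.map_apply (continuous_const_smul A).measurable hs]
    exact congrArg (· s) (h A A.2)

theorem mem_orbit_orthogonalGroup_of_norm_eq {x y : EuclideanSpace ℝ n} (h : ‖x‖ = ‖y‖) :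
    y ∈ orbit (orthogonalGroup n ℝ) x := by
  let b := EuclideanSpace.basisFun n ℝ
  let R := (ℝ ∙ (x - y))ᗮ.reflection
  refine ⟨⟨_, R.toMatrix_mem_unitaryGroup b b⟩, ?_⟩
  change toEuclideanLin _ x = y
  rw [toEuclideanLin_eq_toLin_orthonormal, toLin_toMatrix]
  exact Submodule.reflection_sub h

end Matrix

namespace MeasureTheory.Measure

instance isProbabilityMeasure_haarMeasure_top {G : Type*} [Group G] [TopologicalSpace G]
    [IsTopologicalGroup G] [CompactSpace G] [MeasurableSpace G] [BorelSpace G] :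
    IsProbabilityMeasure (haarMeasure (⊤ : TopologicalSpace.PositiveCompacts G)) :=
  ⟨by simpa using haarMeasure_self (K₀ := (⊤ : TopologicalSpace.PositiveCompacts G))⟩

end MeasureTheory.Measure

section InvariantMeasure

variable {G α : Type*} [Group G] [MulAction G α] [MeasurableSpace G] (ν : Measure G)

theorem measure_setOf_inv_smul_smul_mem [MeasurableMul G] [ν.IsMulLeftInvariant] (h : G) (x : α)
    (S : Set α) : ν {g | g⁻¹ • h • x ∈ S} = ν {g | g⁻¹ • x ∈ S} := by
  rw [← measure_preimage_mul ν h⁻¹ {g | g⁻¹ • x ∈ S}]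
  simp [mul_smul]

variable [MeasurableSpace α] (μ : Measure α)

theorem lintegral_measure_setOf_inv_smul_mem [MeasurableInv G] [MeasurableSMul₂ G α]
    [IsProbabilityMeasure ν] [SFinite μ] [SMulInvariantMeasure G α μ] {S : Set α}
    (hS : MeasurableSet S) : ∫⁻ x, ν {g | g⁻¹ • x ∈ S} ∂μ = μ S := by
  have hU : MeasurableSet {p : G × α | p.1⁻¹ • p.2 ∈ S} :=
    (measurable_fst.inv.smul measurable_snd) hS
  calc ∫⁻ x, ν {g | g⁻¹ • x ∈ S} ∂μ = ν.prod μ {p : G × α | p.1⁻¹ • p.2 ∈ S} :=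
        (Measure.prod_apply_symm hU).symm
    _ = ∫⁻ g, μ ((g⁻¹ • ·) ⁻¹' S) ∂ν := Measure.prod_apply hU
    _ = μ S := by simp [measure_preimage_smul]

theorem measure_setOf_inv_smul_mem_of_ae_mem_orbit [MeasurableMul G] [MeasurableInv G]
    [MeasurableSMul₂ G α] [IsProbabilityMeasure ν] [ν.IsMulLeftInvariant] [IsProbabilityMeasure μ]
    [SMulInvariantMeasure G α μ] {S : Set α} (hS : MeasurableSet S) {x : α}
    (hx : ∀ᵐ y ∂μ, y ∈ orbit G x) : ν {g | g⁻¹ • x ∈ S} = μ S := by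
  calc ν {g | g⁻¹ • x ∈ S} = ∫⁻ _, ν {g | g⁻¹ • x ∈ S} ∂μ := by simp
    _ = ∫⁻ y, ν {g | g⁻¹ • y ∈ S} ∂μ := lintegral_congr_ae <| hx.mono fun _ ⟨h, hy⟩ =>
        hy ▸ (measure_setOf_inv_smul_smul_mem ν h x S).symm
    _ = μ S := lintegral_measure_setOf_inv_smul_mem ν μ hS

theorem exists_forall_notMem_smul_set [MeasurableMul G] [MeasurableInv G]
    [MeasurableSMul₂ G α] [IsProbabilityMeasure ν] [ν.IsMulLeftInvariant] [IsProbabilityMeasure μ]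
    [SMulInvariantMeasure G α μ] {S : Set α} (hS : MeasurableSet S) {ι : Type*} [Fintype ι]
    (hμS : μ S < 1 / Fintype.card ι) (x : ι → α) (hx : ∀ i, ∀ᵐ y ∂μ, y ∈ orbit G (x i)) :
    ∃ g : G, ∀ i, x i ∉ g • S := by
  by_contra! hcover
  have hunion : (⋃ i, {g : G | g⁻¹ • x i ∈ S}) = univ :=
    eq_univ_of_forall fun g => by
      obtain ⟨i, hi⟩ := hcover g
      exact mem_iUnion.2 ⟨i, mem_smul_set_iff_inv_smul_mem.1 hi⟩
  have := measure_iUnion_fintype_le ν fun i => {g : G | g⁻¹ • x i ∈ S}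
  rw [hunion, measure_univ] at this
  simp only [measure_setOf_inv_smul_mem_of_ae_mem_orbit ν μ hS (hx _), Finset.sum_const,
    Finset.card_univ, nsmul_eq_mul] at this
  rw [ENNReal.lt_div_iff_mul_lt (Or.inr (measure_ne_top μ S)) (Or.inl (ENNReal.natCast_ne_top _)),
    mul_comm] at hμS
  exact this.not_gt hμS

end InvariantMeasure

theorem IsCompact.exists_pos_forall_exists_le_dist {X ι m : Type*} [PseudoMetricSpace X]
    [Fintype m] {s : Set X} (hs : IsCompact s) {K : ι → Set X} (hK : ∀ i, IsClosed (K i))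
    (h : ∀ x : m → X, (∀ j, x j ∈ s) → ∃ i, ∀ j, x j ∉ K i) :
    ∃ δ > 0, ∀ x : m → X, (∀ j, x j ∈ s) → ∃ i, ∀ j, ∀ y ∈ K i, δ ≤ dist (x j) y := by
  classical
  obtain ⟨δ, hδ, hball⟩ := lebesgue_number_lemma_of_metric (isCompact_univ_pi fun _ => hs)
    (c := fun i => {x : m → X | ∀ j, x j ∉ K i})
    (fun i => by
      simp only [ofPred_forall]
      exact isOpen_iInter_of_finite fun j =>
        show IsOpen ((fun x : m → X => x j) ⁻¹' (K i)ᶜ) from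
          (hK i).isOpen_compl.preimage (continuous_apply j))
    (fun x hx => mem_iUnion.2 (h x fun j => hx j (mem_univ j)))
  refine ⟨δ, hδ, fun x hx => ?_⟩
  obtain ⟨i, hi⟩ := hball x fun j _ => hx j
  refine ⟨i, fun j y hy => not_lt.1 fun hlt => ?_⟩
  have hmem : Function.update x j y ∈ ball x δ := by
    rw [mem_ball, dist_pi_lt_iff hδ]
    intro k
    rcases eq_or_ne k j with rfl | hk
    · simpa [dist_comm] using hlt
    · simpa [hk] using hδ
  exact hi hmem j (by simpa using hy)

theorem Finset.exists_fin_subset_range_subset_insert {α : Type*} (L : Finset α) (a : α) {n : ℕ}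
    (h : L.card ≤ n) :
    ∃ x : Fin n → α, ↑L ⊆ Set.range x ∧ Set.range x ⊆ insert a (L : Set α) := by
  classical
  let f : L → Fin n := fun l => Fin.castLE h (L.equivFin l)
  have hf : Function.Injective f := (Fin.castLE_injective h).comp L.equivFin.injective
  refine ⟨Function.extend f (↑) fun _ => a, fun l hl => ⟨f ⟨l, hl⟩, hf.extend_apply _ _ _⟩, ?_⟩
  rintro _ ⟨i, rfl⟩
  by_cases hi : ∃ l, f l = i
  · obtain ⟨l, rfl⟩ := hi
    rw [hf.extend_apply]
    exact Set.mem_insert_of_mem _ l.2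
  · rw [Function.extend_apply' _ _ _ hi]
    exact Set.mem_insert a _

theorem stmt1_general (d n : ℕ)
    (μ : Measure (EuclideanSpace ℝ (Fin d))) [IsProbabilityMeasure μ]
    (hsph : μ (sphere (0 : EuclideanSpace ℝ (Fin d)) 1) = 1)
    (hinv : ∀ A ∈ Matrix.orthogonalGroup (Fin d) ℝ,
      μ.map (Matrix.toEuclideanLin A) = μ)
    (K : Set (EuclideanSpace ℝ (Fin d))) (hKc : IsCompact K)
    (hμK : μ (K ∩ sphere (0 : EuclideanSpace ℝ (Fin d)) 1) < 1 / n) :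
    ∃ δ : ℝ, 0 < δ ∧
      ∀ L : Finset (EuclideanSpace ℝ (Fin d)), L.card ≤ n →
        (↑L ⊆ sphere (0 : EuclideanSpace ℝ (Fin d)) 1) →
        ∃ A ∈ Matrix.orthogonalGroup (Fin d) ℝ,
          ∀ x ∈ L, ∀ y ∈ K, δ ≤ dist x (Matrix.toEuclideanLin A y) := by
  have := Matrix.smulInvariantMeasure_of_map_toEuclideanLin_eq hinv
  have hsph_null : μ (sphere 0 1)ᶜ = 0 :=
    (prob_compl_eq_zero_iff isClosed_sphere.measurableSet).2 hsph
  have horbit : ∀ x ∈ sphere (0 : EuclideanSpace ℝ (Fin d)) 1,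
      ∀ᵐ y ∂μ, y ∈ orbit (Matrix.orthogonalGroup (Fin d) ℝ) x := fun x hx =>
    (show ∀ᵐ y ∂μ, y ∈ sphere 0 1 from hsph_null).mono fun _ hy =>
      Matrix.mem_orbit_orthogonalGroup_of_norm_eq <| by
        rw [mem_sphere_zero_iff_norm.1 hx, mem_sphere_zero_iff_norm.1 hy]
  rw [measure_inter_conull hsph_null] at hμK
  have havoid : ∀ x : Fin n → EuclideanSpace ℝ (Fin d), (∀ j, x j ∈ sphere 0 1) →
      ∃ A : Matrix.orthogonalGroup (Fin d) ℝ, ∀ j, x j ∉ A • K := fun x hx =>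
    exists_forall_notMem_smul_set
      (Measure.haarMeasure ⊤ : Measure (Matrix.orthogonalGroup (Fin d) ℝ)) μ
      hKc.isClosed.measurableSet (by simpa using hμK) x fun j => horbit _ (hx j)
  obtain ⟨δ, hδ, hsep⟩ := (isCompact_sphere _ _).exists_pos_forall_exists_le_dist
    (fun A => (hKc.smul A).isClosed) havoid
  obtain ⟨x₀, hx₀⟩ : (sphere (0 : EuclideanSpace ℝ (Fin d)) 1).Nonempty :=
    nonempty_of_measure_ne_zero (μ := μ) (by simp [hsph])
  refine ⟨δ, hδ, fun L hL hLs => ?_⟩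
  obtain ⟨x, hLx, hxL⟩ := L.exists_fin_subset_range_subset_insert x₀ hL
  obtain ⟨A, hA⟩ := hsep x fun j => insert_subset hx₀ hLs (hxL (mem_range_self j))
  refine ⟨A, A.2, fun p hp y hy => ?_⟩
  obtain ⟨j, rfl⟩ := hLx hp
  exact hA j _ (smul_mem_smul_set hy)

/-- For compact K ⊆ B_d with μ(K ∩ S^{d-1}) < 1/n there is δ > 0 such that
for every set L of at most n points on the sphere, some A ∈ O(d) has dist(L, A·K) ≥ δ. -/
theorem stmt1 (d n : ℕ) (hn : 0 < n)
    (μ : Measure (EuclideanSpace ℝ (Fin d))) [IsProbabilityMeasure μ]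
    (hsph : μ (sphere (0 : EuclideanSpace ℝ (Fin d)) 1) = 1)
    (hinv : ∀ A ∈ Matrix.orthogonalGroup (Fin d) ℝ,
      μ.map (Matrix.toEuclideanLin A) = μ)
    (K : Set (EuclideanSpace ℝ (Fin d))) (hKc : IsCompact K)
    (hKB : K ⊆ closedBall (0 : EuclideanSpace ℝ (Fin d)) 1)
    (hμK : μ (K ∩ sphere (0 : EuclideanSpace ℝ (Fin d)) 1) < 1 / n) :
    ∃ δ : ℝ, 0 < δ ∧
      ∀ L : Finset (EuclideanSpace ℝ (Fin d)), L.card ≤ n →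
        (↑L ⊆ sphere (0 : EuclideanSpace ℝ (Fin d)) 1) →
        ∃ A ∈ Matrix.orthogonalGroup (Fin d) ℝ,
          ∀ x ∈ L, ∀ y ∈ K, δ ≤ dist x (Matrix.toEuclideanLin A y) :=
  stmt1_general d n μ hsph hinv K hKc hμK
end

section
/- Let K ⊆ B_d be compact and n a positive integer. Suppose there is a closed half-sphere D ⊆ S^{d-1} with μ(K ∩ D) < 1/n. Then there exists δ₂ > 0 such that for any n closed half-spaces H₁, ..., Hₙ each containing the unit ball B_d, the intersection H₁ ∩ ... ∩ Hₙ contains a set of the form a + (1+δ₂)·A·K for some a ∈ ℝ^d and A ∈ O(d). -/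
/-!
For small `ε > 0`, the unit directions `w` with `⟪w, u⟫ ≥ -ε` along which `K` comes within `ε`
of the supporting hyperplane `{⟪·, w⟫ = 1}` form a closed set, and these sets decrease to
`K ∩ D(u)` as `ε → 0`; so one of them has measure `< 1/n`. If `g` is Haar-random in `O(d)`, each
`g⁻¹ w` is `μ`-distributed, so by the union bound some `g` keeps all `n` unit normals `g⁻¹ wᵢ` out
of this set. In each such normal direction either `⟪z, u⟫ < -ε` or `K` stays below `1 - ε`; in
both cases `g K` translated by `(ε/2) g u` and scaled by `1 + ε²/2` stays inside the half-space.
-/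

open MeasureTheory Metric Set Filter MulAction
open scoped RealInnerProductSpace ENNReal

section HaarAveraging

variable {G X : Type*} [Group G] [MeasurableSpace G] [MeasurableMul G] [MulAction G X]

theorem measure_setOf_inv_smul_mem_of_mem_orbit (ν : Measure G) [ν.IsMulLeftInvariant]
    {w x : X} (hx : x ∈ orbit G w) (C : Set X) :
    ν {g | g⁻¹ • x ∈ C} = ν {g | g⁻¹ • w ∈ C} := by
  obtain ⟨h, rfl⟩ := hx
  have : {g : G | g⁻¹ • h • w ∈ C} = (h⁻¹ * ·) ⁻¹' {g | g⁻¹ • w ∈ C} := by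
    ext g; simp [mul_smul]
  rw [this, measure_preimage_mul]

variable [MeasurableInv G] [MeasurableSpace X] [MeasurableSMul₂ G X]
  {μ : Measure X} [IsProbabilityMeasure μ]

theorem map_inv_smul_eq_of_ae_mem_orbit (ν : Measure G) [IsProbabilityMeasure ν]
    [ν.IsMulLeftInvariant] (hμ : ∀ g : G, μ.map (g • ·) = μ) {w : X}
    (hw : ∀ᵐ x ∂μ, x ∈ orbit G w) : ν.map (fun g => g⁻¹ • w) = μ := by
  ext C hC
  set T : Set (G × X) := {p | p.1⁻¹ • p.2 ∈ C}
  have hT : MeasurableSet T := (measurable_fst.inv.smul measurable_snd) hC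
  calc ν.map (fun g => g⁻¹ • w) C = ν {g | g⁻¹ • w ∈ C} :=
        Measure.map_apply (measurable_inv.smul_const w) hC
    _ = ∫⁻ x, ν {g | g⁻¹ • x ∈ C} ∂μ := by
        rw [lintegral_congr_ae (hw.mono fun x hx =>
          measure_setOf_inv_smul_mem_of_mem_orbit ν hx C), lintegral_const, measure_univ,
          mul_one]
    _ = ν.prod μ T := (Measure.prod_apply_symm hT).symm
    _ = ∫⁻ g, μ.map (g⁻¹ • ·) C ∂ν := by
        rw [Measure.prod_apply hT]
        exact lintegral_congr fun g => (Measure.map_apply (measurable_const_smul g⁻¹) hC).symm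
    _ = μ C := by simp [hμ]

theorem exists_forall_inv_smul_notMem (ν : Measure G) [IsProbabilityMeasure ν]
    [ν.IsMulLeftInvariant] {ι : Type*} [Fintype ι] (hμ : ∀ g : G, μ.map (g • ·) = μ)
    {w : ι → X} (hw : ∀ i, ∀ᵐ x ∂μ, x ∈ orbit G (w i)) {C : Set X} (hC : MeasurableSet C)
    (hμC : Fintype.card ι * μ C < 1) : ∃ g : G, ∀ i, g⁻¹ • w i ∉ C := by
  by_contra! hcover
  have hmeas i : ν {g | g⁻¹ • w i ∈ C} = μ C := by
    rw [← map_inv_smul_eq_of_ae_mem_orbit ν hμ (hw i),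
      Measure.map_apply (measurable_inv.smul_const _) hC]
    rfl
  have : ν univ ≤ Fintype.card ι * μ C := calc
    ν univ ≤ ν (⋃ i, {g | g⁻¹ • w i ∈ C}) :=
        measure_mono fun g _ => mem_iUnion.2 (hcover g)
    _ ≤ ∑ i, ν {g | g⁻¹ • w i ∈ C} := measure_iUnion_fintype_le _ _
    _ = Fintype.card ι * μ C := by simp [hmeas]
  exact (measure_univ (μ := ν) ▸ this).not_gt hμC

end HaarAveraging

instance {G : Type*} [Group G] [TopologicalSpace G] [IsTopologicalGroup G] [CompactSpace G]
    [MeasurableSpace G] [BorelSpace G] :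
    IsProbabilityMeasure (Measure.haarMeasure (⊤ : TopologicalSpace.PositiveCompacts G)) :=
  ⟨by rw [← TopologicalSpace.PositiveCompacts.coe_top, Measure.haarMeasure_self]⟩

namespace Matrix

variable {𝕜 n : Type*} [RCLike 𝕜] [Fintype n] [DecidableEq n]

instance : ContinuousSMul (Matrix n n 𝕜) (EuclideanSpace 𝕜 n) := by
  constructor
  have : Continuous fun M : Matrix n n 𝕜 => toEuclideanCLM (n := n) (𝕜 := 𝕜) M :=
    LinearMap.continuous_of_finiteDimensional
      (toEuclideanCLM (n := n) (𝕜 := 𝕜)).toAlgEquiv.toLinearMap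
  exact (this.comp continuous_fst).clm_apply continuous_snd

namespace UnitaryGroup

instance : CompactSpace (unitaryGroup n 𝕜) := by
  refine isCompact_iff_compactSpace.mp <|
    (isCompact_univ_pi fun _ => isCompact_univ_pi fun _ => isCompact_closedBall (0 : 𝕜) 1)
      |>.of_isClosed_subset (isClosed_unitary (R := Matrix n n 𝕜)) ?_
  exact fun U hU i _ j _ => mem_closedBall_zero_iff.2 (entry_norm_bound_of_unitary hU i j)

noncomputable instance : MeasurableSpace (unitaryGroup n 𝕜) := borel _

instance : BorelSpace (unitaryGroup n 𝕜) := ⟨rfl⟩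

theorem toEuclideanCLM_mem_unitary (A : unitaryGroup n 𝕜) :
    toEuclideanCLM (n := n) (𝕜 := 𝕜) A ∈ unitary (EuclideanSpace 𝕜 n →L[𝕜] EuclideanSpace 𝕜 n) :=
  Unitary.map_mem _ A.2

theorem inner_smul_smul (A : unitaryGroup n 𝕜) (x y : EuclideanSpace 𝕜 n) :
    inner 𝕜 (A • x) (A • y) = inner 𝕜 x y :=
  Unitary.inner_map_map ⟨_, toEuclideanCLM_mem_unitary A⟩ x y

theorem inner_smul_left_eq_inner_inv_smul (A : unitaryGroup n 𝕜) (x y : EuclideanSpace 𝕜 n) :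
    inner 𝕜 (A • x) y = inner 𝕜 x (A⁻¹ • y) :=
  (congrArg (inner 𝕜 (A • x)) (smul_inv_smul A y)).symm.trans (inner_smul_smul A x _)

theorem norm_smul_eq_norm (A : unitaryGroup n 𝕜) (x : EuclideanSpace 𝕜 n) : ‖A • x‖ = ‖x‖ :=
  Unitary.norm_map ⟨_, toEuclideanCLM_mem_unitary A⟩ x

theorem exists_smul_eq_of_norm_eq {x y : EuclideanSpace ℝ n} (h : ‖x‖ = ‖y‖) :
    ∃ A : orthogonalGroup n ℝ, A • x = y := by
  let f := Unitary.linearIsometryEquiv.symm (Submodule.reflection (ℝ ∙ (x - y))ᗮ)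
  let e : (EuclideanSpace ℝ n →L[ℝ] EuclideanSpace ℝ n) ≃⋆ₐ[ℝ] Matrix n n ℝ :=
    toEuclideanCLM.symm
  refine ⟨⟨e f, Unitary.map_mem e f.2⟩, ?_⟩
  change toEuclideanCLM (n := n) (𝕜 := ℝ) (e f) x = y
  simpa [e, f] using Submodule.reflection_sub h

end UnitaryGroup

end Matrix

section BadDirections

variable {E : Type*} [NormedAddCommGroup E] [InnerProductSpace ℝ E]

def badDirections (K : Set E) (u : E) (ε : ℝ) : Set E :=
  {w | ‖w‖ = 1 ∧ -ε ≤ ⟪w, u⟫ ∧ ∃ y ∈ K, 1 - ε ≤ ⟪y, w⟫}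

theorem badDirections_mono (K : Set E) (u : E) : Monotone (badDirections K u) :=
  fun _ _ hεε' _ ⟨hw, hwu, y, hy, hyw⟩ => ⟨hw, by linarith, y, hy, by linarith⟩

theorem IsCompact.isClosed_setOf_exists_le_inner {K : Set E} (hK : IsCompact K) (t : ℝ) :
    IsClosed {w : E | ∃ y ∈ K, t ≤ ⟪y, w⟫} := by
  have := isCompact_iff_compactSpace.mp hK
  have hC : IsClosed {p : K × E | t ≤ ⟪(p.1 : E), p.2⟫} :=
    isClosed_le continuous_const ((continuous_subtype_val.comp continuous_fst).inner continuous_snd)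
  convert isClosedMap_snd_of_compactSpace _ hC using 1
  ext w
  simp

theorem IsCompact.isClosed_badDirections {K : Set E} (hK : IsCompact K) (u : E) (ε : ℝ) :
    IsClosed (badDirections K u ε) :=
  show IsClosed ({w : E | ‖w‖ = 1} ∩ ({w | -ε ≤ ⟪w, u⟫} ∩ {w | ∃ y ∈ K, 1 - ε ≤ ⟪y, w⟫})) from
  (isClosed_eq continuous_norm continuous_const).inter <|
    (isClosed_le continuous_const (continuous_id.inner continuous_const)).inter <|
      hK.isClosed_setOf_exists_le_inner _

theorem biInter_badDirections_subset {K : Set E} (hK : IsClosed K)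
    (hKB : K ⊆ closedBall 0 1) (u : E) :
    ⋂ ε > 0, badDirections K u ε ⊆ K ∩ {x ∈ sphere 0 1 | 0 ≤ ⟪x, u⟫} := by
  intro w hw
  simp only [mem_iInter] at hw
  have hw1 : ‖w‖ = 1 := (hw 1 one_pos).1
  refine ⟨?_, mem_sphere_zero_iff_norm.2 hw1,
    le_of_forall_pos_le_add fun ε hε => by linarith [(hw ε hε).2.1]⟩
  -- a point `y` of the unit ball with `⟪y, w⟫ ≥ 1 - ε` satisfies `‖w - y‖² ≤ 2ε`
  refine hK.closure_eq ▸ Metric.mem_closure_iff.2 fun δ hδ => ?_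
  obtain ⟨y, hy, hyw⟩ := (hw (δ ^ 2 / 4) (by positivity)).2.2
  refine ⟨y, hy, (sq_lt_sq₀ dist_nonneg hδ.le).1 ?_⟩
  have hy1 : ‖y‖ ≤ 1 := mem_closedBall_zero_iff.1 (hKB hy)
  rw [dist_eq_norm, norm_sub_sq_real, hw1, real_inner_comm]
  nlinarith [norm_nonneg y]

theorem exists_measure_badDirections_lt [MeasurableSpace E] [OpensMeasurableSpace E]
    (μ : Measure E) [IsFiniteMeasure μ] {K : Set E} (hK : IsCompact K)
    (hKB : K ⊆ closedBall 0 1) {u : E} {r : ℝ≥0∞}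
    (h : μ (K ∩ {x ∈ sphere 0 1 | 0 ≤ ⟪x, u⟫}) < r) :
    ∃ ε > 0, μ (badDirections K u ε) < r := by
  have hlim := tendsto_measure_biInter_gt (μ := μ) (a := 0)
    (fun ε _ => (hK.isClosed_badDirections u ε).measurableSet.nullMeasurableSet)
    (fun _ _ _ hεε' => badDirections_mono K u hεε') ⟨1, one_pos, measure_ne_top _ _⟩
  have hlt := (measure_mono (biInter_badDirections_subset hK.isClosed hKB u)).trans_lt h
  exact ((hlim.eventually (gt_mem_nhds hlt)).and self_mem_nhdsWithin).exists.imp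
    fun ε hε => ⟨hε.2, hε.1⟩

theorem inner_add_inner_le_one_of_notMem_badDirections {K : Set E} {u y z : E} {ε : ℝ}
    (hε : 0 ≤ ε) (hu : ‖u‖ = 1) (hy : y ∈ K) (hyB : ‖y‖ ≤ 1) (hz : ‖z‖ = 1)
    (hzK : z ∉ badDirections K u ε) :
    ε / 2 * ⟪u, z⟫ + (1 + ε ^ 2 / 2) * ⟪y, z⟫ ≤ 1 := by
  have huz : ⟪u, z⟫ ≤ 1 := by simpa [hu, hz] using real_inner_le_norm u z
  have hyz : ⟪y, z⟫ ≤ 1 := by nlinarith [real_inner_le_norm y z]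
  simp only [badDirections, mem_ofPred_eq, hz, true_and, not_and, not_exists, not_le] at hzK
  by_cases hzu : -ε ≤ ⟪z, u⟫
  · have hyz' := hzK hzu y hy
    nlinarith [mul_le_mul_of_nonneg_left huz (by positivity : 0 ≤ ε / 2),
      mul_le_mul_of_nonneg_left hyz'.le (by positivity : 0 ≤ 1 + ε ^ 2 / 2),
      mul_nonneg hε (by nlinarith : 0 ≤ 1 - ε + ε ^ 2)]
  · rw [not_le, real_inner_comm] at hzu
    nlinarith [mul_le_mul_of_nonneg_left hzu.le (by positivity : 0 ≤ ε / 2),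
      mul_le_mul_of_nonneg_left hyz (by positivity : 0 ≤ 1 + ε ^ 2 / 2)]

theorem exists_norm_eq_one_setOf_inner_le_one_subset [Nontrivial E] {v : E} {c : ℝ}
    (h : closedBall (0 : E) 1 ⊆ {x | ⟪x, v⟫ ≤ c}) :
    ∃ w : E, ‖w‖ = 1 ∧ {x | ⟪x, w⟫ ≤ 1} ⊆ {x | ⟪x, v⟫ ≤ c} := by
  rcases eq_or_ne v 0 with rfl | hv
  · obtain ⟨w, hw⟩ := exists_norm_eq E zero_le_one
    exact ⟨w, hw, fun x _ => by simpa using h (mem_closedBall_self zero_le_one)⟩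
  have hv' : 0 < ‖v‖ := norm_pos_iff.2 hv
  have hw : ‖(‖v‖⁻¹ : ℝ) • v‖ = 1 := norm_smul_inv_norm hv
  refine ⟨‖v‖⁻¹ • v, hw, fun x hx => ?_⟩
  have hvc : ‖v‖ ≤ c := by
    have := h (mem_closedBall_zero_iff.2 hw.le)
    rwa [mem_ofPred_eq, real_inner_smul_left, real_inner_self_eq_norm_sq, sq,
      inv_mul_cancel_left₀ hv'.ne'] at this
  rw [mem_ofPred_eq, real_inner_smul_right, inv_mul_le_iff₀ hv', mul_one] at hx
  exact hx.trans hvc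

end BadDirections

open Matrix.UnitaryGroup in
theorem stmt3_general (d n : ℕ)
    (μ : Measure (EuclideanSpace ℝ (Fin d))) [IsProbabilityMeasure μ]
    (hsph : μ (sphere (0 : EuclideanSpace ℝ (Fin d)) 1) = 1)
    (hinv : ∀ A ∈ Matrix.orthogonalGroup (Fin d) ℝ,
      μ.map (Matrix.toEuclideanLin A) = μ)
    (K : Set (EuclideanSpace ℝ (Fin d))) (hKc : IsCompact K)
    (hKB : K ⊆ closedBall (0 : EuclideanSpace ℝ (Fin d)) 1)
    (u : EuclideanSpace ℝ (Fin d)) (hu : ‖u‖ = 1)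
    (hμK : μ (K ∩ {x ∈ sphere (0 : EuclideanSpace ℝ (Fin d)) 1 | 0 ≤ ⟪x, u⟫}) < 1 / n) :
    ∃ δ₂ : ℝ, 0 < δ₂ ∧
      ∀ (v : Fin n → EuclideanSpace ℝ (Fin d)) (c : Fin n → ℝ),
        (∀ i, closedBall (0 : EuclideanSpace ℝ (Fin d)) 1 ⊆ {x | ⟪x, v i⟫ ≤ c i}) →
        ∃ (a : EuclideanSpace ℝ (Fin d)), ∃ A ∈ Matrix.orthogonalGroup (Fin d) ℝ,
          (fun y => a + (1 + δ₂) • Matrix.toEuclideanLin A y) '' K ⊆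
            ⋂ i, {x : EuclideanSpace ℝ (Fin d) | ⟪x, v i⟫ ≤ c i} := by
  obtain ⟨ε, hε, hμε⟩ := exists_measure_badDirections_lt μ hKc hKB hμK
  refine ⟨ε ^ 2 / 2, by positivity, fun v c hvc => ?_⟩
  have : Nontrivial (EuclideanSpace ℝ (Fin d)) :=
    nontrivial_of_ne u 0 (ne_zero_of_norm_ne_zero (by simp [hu]))
  choose w hw hwv using fun i => exists_norm_eq_one_setOf_inner_le_one_subset (hvc i)
  have hsph' : ∀ᵐ x ∂μ, x ∈ sphere (0 : EuclideanSpace ℝ (Fin d)) 1 :=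
    (ae_iff_measure_eq isClosed_sphere.measurableSet.nullMeasurableSet).2
      (hsph.trans measure_univ.symm)
  have horbit i : ∀ᵐ x ∂μ, x ∈ orbit (Matrix.orthogonalGroup (Fin d) ℝ) (w i) :=
    hsph'.mono fun x hx =>
      exists_smul_eq_of_norm_eq ((hw i).trans (mem_sphere_zero_iff_norm.1 hx).symm)
  have hμ (g : Matrix.orthogonalGroup (Fin d) ℝ) : μ.map (g • ·) = μ := hinv g g.2
  obtain ⟨g, hg⟩ := exists_forall_inv_smul_notMem (Measure.haarMeasure ⊤) hμ horbit
    (hKc.isClosed_badDirections u ε).measurableSet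
    (by simpa using ENNReal.mul_lt_of_lt_div' hμε)
  refine ⟨(ε / 2) • g • u, g, g.2, ?_⟩
  rintro _ ⟨y, hy, rfl⟩
  refine mem_iInter.2 fun i => hwv i ?_
  change ⟪(ε / 2) • g • u + (1 + ε ^ 2 / 2) • g • y, w i⟫ ≤ 1
  rw [inner_add_left, real_inner_smul_left, real_inner_smul_left,
    inner_smul_left_eq_inner_inv_smul, inner_smul_left_eq_inner_inv_smul]
  exact inner_add_inner_le_one_of_notMem_badDirections hε.le hu hy
    (mem_closedBall_zero_iff.1 (hKB hy)) (by rw [norm_smul_eq_norm, hw i]) (hg i)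

/-- Let K ⊆ B_d be compact with a closed half-sphere D ⊆ S^{d-1} such that
μ(K ∩ D) < 1/n.  Then there is δ₂ > 0 such that the intersection of any n closed
half-spaces containing B_d contains a + (1+δ₂)·A·K for some a ∈ ℝ^d, A ∈ O(d). -/
theorem stmt3 (d n : ℕ) (hn : 0 < n)
    (μ : Measure (EuclideanSpace ℝ (Fin d))) [IsProbabilityMeasure μ]
    (hsph : μ (sphere (0 : EuclideanSpace ℝ (Fin d)) 1) = 1)
    (hinv : ∀ A ∈ Matrix.orthogonalGroup (Fin d) ℝ,
      μ.map (Matrix.toEuclideanLin A) = μ)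
    (K : Set (EuclideanSpace ℝ (Fin d))) (hKc : IsCompact K)
    (hKB : K ⊆ closedBall (0 : EuclideanSpace ℝ (Fin d)) 1)
    (u : EuclideanSpace ℝ (Fin d)) (hu : ‖u‖ = 1)
    (hμK : μ (K ∩ {x ∈ sphere (0 : EuclideanSpace ℝ (Fin d)) 1 | 0 ≤ ⟪x, u⟫}) < 1 / n) :
    ∃ δ₂ : ℝ, 0 < δ₂ ∧
      ∀ (v : Fin n → EuclideanSpace ℝ (Fin d)) (c : Fin n → ℝ),
        (∀ i, closedBall (0 : EuclideanSpace ℝ (Fin d)) 1 ⊆ {x | ⟪x, v i⟫ ≤ c i}) →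
        ∃ (a : EuclideanSpace ℝ (Fin d)), ∃ A ∈ Matrix.orthogonalGroup (Fin d) ℝ,
          (fun y => a + (1 + δ₂) • Matrix.toEuclideanLin A y) '' K ⊆
            ⋂ i, {x : EuclideanSpace ℝ (Fin d) | ⟪x, v i⟫ ≤ c i} :=
  stmt3_general d n μ hsph hinv K hKc hKB u hu hμK
end

section
/- Let 𝒲₁ and 𝒲₂ be families of sets in ℝ^d, each with finite Helly number h(𝒲₁) and h(𝒲₂) respectively. Then the union family 𝒲₁ ∪ 𝒲₂ also has a finite Helly number, and h(𝒲₁ ∪ 𝒲₂) ≤ h(𝒲₁) + h(𝒲₂). -/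
open Set

/-- A family 𝒲 of subsets of ℝ^d satisfies the Helly property with parameter n if for
every finite family of convex sets, whenever the intersection of every subfamily of size
at most n contains a member of 𝒲, the intersection of the whole family contains a member
of 𝒲.  (The Helly number h(𝒲) is the least such n.) -/
def HellyProp (d : ℕ) (W : Set (Set (EuclideanSpace ℝ (Fin d)))) (n : ℕ) : Prop :=
  ∀ F : Finset (Set (EuclideanSpace ℝ (Fin d))), (∀ C ∈ F, Convex ℝ C) →
    (∀ G ⊆ F, G.card ≤ n → ∃ w ∈ W, w ⊆ ⋂₀ (G : Set (Set (EuclideanSpace ℝ (Fin d))))) →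
    ∃ w ∈ W, w ⊆ ⋂₀ (F : Set (Set (EuclideanSpace ℝ (Fin d))))

/-- If 𝒲₁ and 𝒲₂ have finite Helly numbers h(𝒲₁) ≤ n₁ and h(𝒲₂) ≤ n₂,
then 𝒲₁ ∪ 𝒲₂ has Helly number at most n₁ + n₂. -/
theorem stmt4 (d n₁ n₂ : ℕ) (W₁ W₂ : Set (Set (EuclideanSpace ℝ (Fin d))))
    (h1 : HellyProp d W₁ n₁) (h2 : HellyProp d W₂ n₂) :
    HellyProp d (W₁ ∪ W₂) (n₁ + n₂) := by
  classical
  intro F hconv hG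
  by_cases hc : ∀ G ⊆ F, G.card ≤ n₁ →
      ∃ w ∈ W₁, w ⊆ ⋂₀ (G : Set (Set (EuclideanSpace ℝ (Fin d))))
  · obtain ⟨w, hw, hsub⟩ := h1 F hconv hc
    exact ⟨w, Or.inl hw, hsub⟩
  · push_neg at hc
    obtain ⟨G₁, hG₁F, hG₁card, hG₁⟩ := hc
    have h2hyp : ∀ G ⊆ F, G.card ≤ n₂ →
        ∃ w ∈ W₂, w ⊆ ⋂₀ (G : Set (Set (EuclideanSpace ℝ (Fin d)))) := by
      intro G hGF hGcard
      obtain ⟨w, hw, hsub⟩ := hG (G₁ ∪ G) (Finset.union_subset hG₁F hGF)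
        (le_trans (Finset.card_union_le _ _) (add_le_add hG₁card hGcard))
      have hco : ((G₁ : Set (Set (EuclideanSpace ℝ (Fin d)))) ⊆ ↑(G₁ ∪ G)) := by
        intro x hx; simp_all
      have hco2 : ((G : Set (Set (EuclideanSpace ℝ (Fin d)))) ⊆ ↑(G₁ ∪ G)) := by
        intro x hx; simp_all
      rcases hw with h | h
      · exact absurd (hsub.trans (Set.sInter_subset_sInter hco)) (hG₁ w h)
      · exact ⟨w, h, hsub.trans (Set.sInter_subset_sInter hco2)⟩
    obtain ⟨w, hw, hsub⟩ := h2 F hconv h2hyp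
    exact ⟨w, Or.inr hw, hsub⟩
end

section
/- Let K be a compact convex subset of the closed unit ball B_d ⊆ ℝ^d such that B_d is the minimum volume ellipsoid containing K. If K' = a + T·K is an affine image of K (T an invertible linear map, a ∈ ℝ^d) contained in B_d, then vol(K') ≤ vol(K); moreover if vol(K') = vol(K) then T is a scalar multiple of an orthogonal transformation with |det T| = 1, i.e., the affine map is an isometry. -/
/-
By minimality of `B`, every ellipsoid `x₀ + S(B)` containing `K` has `|det S| ≥ 1`. Applied to
`T⁻¹(B - a) ⊇ K` this gives `|det T| ≤ 1`, i.e. `vol K' ≤ vol K`. If `|det T| = 1`, then `K` lies in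
`B ∩ T⁻¹(B - a)`, hence in the averaged ellipsoid `{x | ‖x‖² + ‖a + T x‖² ≤ 2}`, whose shape
operator is `M = ½(1 + T*T)`. Minimality forces `det M ≤ 1 = det (T*T)`, and AM-GM on the
eigenvalues of `T*T` shows that this happens only for `T*T = 1`.
-/

open MeasureTheory Metric Set
open scoped RealInnerProductSpace

section Volume

variable {E : Type*} [NormedAddCommGroup E] [NormedSpace ℝ E] [MeasurableSpace E] [BorelSpace E]
  [FiniteDimensional ℝ E] (μ : Measure E) [μ.IsAddHaarMeasure]

theorem addHaar_image_affine (a : E) (f : E →ₗ[ℝ] E) (s : Set E) :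
    μ ((fun x => a + f x) '' s) = ENNReal.ofReal |LinearMap.det f| * μ s := by
  rw [← image_image (a + ·) f, image_add_left, measure_preimage_add,
    Measure.addHaar_image_linearMap]

theorem one_le_abs_det_of_addHaar_closedBall_le {b : E} {f : E →ₗ[ℝ] E}
    (h : μ (closedBall 0 1) ≤ μ ((fun x => b + f x) '' closedBall 0 1)) :
    1 ≤ |LinearMap.det f| := by
  rw [addHaar_image_affine] at h
  have h₀ : μ (closedBall (0 : E) 1) ≠ 0 := (measure_closedBall_pos μ 0 one_pos).ne'
  have h₁ : μ (closedBall (0 : E) 1) ≠ ⊤ := measure_closedBall_lt_top.ne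
  exact ENNReal.one_le_ofReal.mp <| (ENNReal.mul_le_mul_iff_left h₀ h₁).mp (by rwa [one_mul])

end Volume

theorem LinearMap.det_eq_prod_of_apply_basis_eq_smul {ι R M : Type*} [Fintype ι] [DecidableEq ι]
    [CommRing R] [AddCommGroup M] [Module R M] (b : Module.Basis ι R M) {f : M →ₗ[R] M} {c : ι → R}
    (hf : ∀ i, f (b i) = c i • b i) : LinearMap.det f = ∏ i, c i := by
  have : f = Matrix.toLin b b (Matrix.diagonal c) :=
    b.ext fun i => by simp [hf, Matrix.toLin_self, Matrix.diagonal_apply]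
  rw [this, LinearMap.det_toLin, Matrix.det_diagonal]

section InnerProduct

variable {E F : Type*} [NormedAddCommGroup E] [InnerProductSpace ℝ E]
  [NormedAddCommGroup F] [InnerProductSpace ℝ F]

theorem norm_sq_add_norm_sq_eq_of_inner_eq_zero (L : E →ₗ[ℝ] F) (a : F) {x₀ : E}
    (hx₀ : ∀ h, ⟪x₀, h⟫ + ⟪a + L x₀, L h⟫ = 0) (x : E) :
    ‖x‖ ^ 2 + ‖a + L x‖ ^ 2 =
      ‖x₀‖ ^ 2 + ‖a + L x₀‖ ^ 2 + (‖x - x₀‖ ^ 2 + ‖L (x - x₀)‖ ^ 2) := by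
  have hx : x = x₀ + (x - x₀) := by abel
  have hLx : a + L x = (a + L x₀) + L (x - x₀) := by rw [add_assoc, ← map_add, ← hx]
  rw [hLx, norm_add_sq_real, hx, norm_add_sq_real, ← hx]
  linarith [hx₀ (x - x₀)]

theorem exists_inner_add_inner_map_eq_zero [FiniteDimensional ℝ E] [FiniteDimensional ℝ F]
    (L : E →ₗ[ℝ] F) (a : F) : ∃ x₀ : E, ∀ h, ⟪x₀, h⟫ + ⟪a + L x₀, L h⟫ = 0 := by
  set A : E →ₗ[ℝ] E := 1 + LinearMap.adjoint L ∘ₗ L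
  have hA : ∀ v, ⟪A v, v⟫ = ‖v‖ ^ 2 + ‖L v‖ ^ 2 := fun v => by
    simp [A, inner_add_left, LinearMap.adjoint_inner_left]
  have hinj : Function.Injective A := by
    refine (injective_iff_map_eq_zero A).mpr fun v hv => ?_
    have h0 : ‖v‖ ^ 2 = 0 := by
      linarith [hA v, sq_nonneg ‖v‖, sq_nonneg ‖L v‖, show ⟪A v, v⟫ = 0 by rw [hv, inner_zero_left]]
    simpa using h0
  obtain ⟨x₀, hx₀⟩ := LinearMap.injective_iff_surjective.mp hinj (-LinearMap.adjoint L a)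
  refine ⟨x₀, fun h => ?_⟩
  rw [← LinearMap.adjoint_inner_left, ← inner_add_left, map_add]
  have : x₀ + LinearMap.adjoint L (L x₀) = A x₀ := by simp [A]
  rw [add_left_comm, this, hx₀, add_neg_cancel, inner_zero_left]

variable [FiniteDimensional ℝ E]

theorem LinearMap.IsPositive.exists_norm_sq_eq_inner {M : E →ₗ[ℝ] E} (hM : M.IsPositive) :
    ∃ R : E →ₗ[ℝ] E, (∀ v, ‖R v‖ ^ 2 = ⟪M v, v⟫) ∧ LinearMap.det R ^ 2 = LinearMap.det M := by
  set b := hM.isSymmetric.eigenvectorBasis rfl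
  set μ := hM.isSymmetric.eigenvalues rfl
  have hμ : ∀ i, Real.sqrt (μ i) ^ 2 = μ i := fun i => Real.sq_sqrt (hM.nonneg_eigenvalues rfl i)
  have hM' : ∀ v i, b.repr (M v) i = μ i * b.repr v i :=
    hM.isSymmetric.eigenvectorBasis_apply_self_apply rfl
  set R := Matrix.toLin b.toBasis b.toBasis (Matrix.diagonal fun i => Real.sqrt (μ i))
  have hR : ∀ v i, b.repr (R v) i = Real.sqrt (μ i) * b.repr v i := fun v i => by
    simp [R, ← OrthonormalBasis.coe_toBasis_repr_apply, Matrix.repr_toLin, Matrix.mulVec_diagonal]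
  refine ⟨R, fun v => ?_, ?_⟩
  · rw [← real_inner_self_eq_norm_sq, ← b.repr.inner_map_map, ← b.repr.inner_map_map]
    simp only [PiLp.inner_apply, RCLike.inner_apply, conj_trivial, hR, hM']
    exact Finset.sum_congr rfl fun i _ => by linear_combination (b.repr v i) ^ 2 * hμ i
  · rw [LinearMap.det_toLin, Matrix.det_diagonal, ← Finset.prod_pow,
      hM.isSymmetric.det_eq_prod_eigenvalues rfl]
    exact Finset.prod_congr rfl fun i _ => hμ i

theorem LinearMap.IsPositive.eq_one_of_det_midpoint_sq_le {G : E →ₗ[ℝ] E} (hG : G.IsPositive)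
    (h : LinearMap.det ((2⁻¹ : ℝ) • (1 + G)) ^ 2 ≤ LinearMap.det G) : G = 1 := by
  set b := hG.isSymmetric.eigenvectorBasis rfl
  set μ := hG.isSymmetric.eigenvalues rfl
  have hμ₀ : ∀ i, 0 ≤ μ i := hG.nonneg_eigenvalues rfl
  have hGb : ∀ i, G (b i) = μ i • b i := hG.isSymmetric.apply_eigenvectorBasis rfl
  have hdetG : LinearMap.det G = ∏ i, μ i := hG.isSymmetric.det_eq_prod_eigenvalues rfl
  have hdetM : LinearMap.det ((2⁻¹ : ℝ) • (1 + G)) = ∏ i, (1 + μ i) / 2 := by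
    refine LinearMap.det_eq_prod_of_apply_basis_eq_smul b.toBasis fun i => ?_
    simp only [OrthonormalBasis.coe_toBasis, LinearMap.smul_apply, LinearMap.add_apply,
      Module.End.one_apply, hGb]
    module
  rw [hdetG, hdetM, ← Finset.prod_pow] at h
  have hamgm : ∀ i, μ i ≤ ((1 + μ i) / 2) ^ 2 := fun i => by nlinarith [sq_nonneg (μ i - 1)]
  have hμpos : ∀ i, 0 < μ i := by
    have hprod : 0 < ∏ i, μ i :=
      h.trans_lt' (Finset.prod_pos fun i _ => pow_pos (by linarith [hμ₀ i]) 2)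
    exact fun i => (hμ₀ i).lt_of_ne' (Finset.prod_ne_zero_iff.mp hprod.ne' i (Finset.mem_univ i))
  have hμ1 : ∀ i, μ i = 1 := by
    by_contra! ⟨i, hi⟩
    have hlt : μ i < ((1 + μ i) / 2) ^ 2 := by
      nlinarith [sq_pos_of_ne_zero (sub_ne_zero.mpr hi)]
    exact h.not_gt (Finset.prod_lt_prod (fun j _ => hμpos j) (fun j _ => hamgm j)
      ⟨i, Finset.mem_univ i, hlt⟩)
  refine b.toBasis.ext fun i => ?_
  simp [b, hGb, hμ1]

theorem LinearMap.norm_map_of_adjoint_comp_self_eq_one {L : E →ₗ[ℝ] E}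
    (h : LinearMap.adjoint L ∘ₗ L = 1) (x : E) : ‖L x‖ = ‖x‖ := by
  have hx : ⟪(LinearMap.adjoint L ∘ₗ L) x, x⟫ = ⟪x, x⟫ := by rw [h, Module.End.one_apply]
  rw [LinearMap.comp_apply, LinearMap.adjoint_inner_left, real_inner_self_eq_norm_sq,
    real_inner_self_eq_norm_sq] at hx
  exact (sq_eq_sq₀ (norm_nonneg _) (norm_nonneg _)).mp hx

theorem exists_affine_image_closedBall_superset (L : E →ₗ[ℝ] E) (a : E) :
    ∃ (x₀ : E) (S : E ≃ₗ[ℝ] E),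
      (∀ x, ‖x‖ ≤ 1 → ‖a + L x‖ ≤ 1 → x ∈ (fun y => x₀ + S y) '' closedBall 0 1) ∧
      LinearMap.det (S : E →ₗ[ℝ] E) ^ 2 *
        LinearMap.det ((2⁻¹ : ℝ) • (1 + LinearMap.adjoint L ∘ₗ L)) = 1 := by
  -- `x₀` is the centre of the ellipsoid `{x | ‖x‖² + ‖a + L x‖² ≤ 2}`.
  obtain ⟨x₀, hx₀⟩ := exists_inner_add_inner_map_eq_zero L a
  have hM : ((2⁻¹ : ℝ) • (1 + LinearMap.adjoint L ∘ₗ L)).IsPositive :=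
    (LinearMap.isPositive_one.add (LinearMap.isPositive_adjoint_comp_self L)).smul_of_nonneg
      (by norm_num)
  obtain ⟨R, hR, hdetR⟩ := hM.exists_norm_sq_eq_inner
  have hRv : ∀ v, 2 * ‖R v‖ ^ 2 = ‖v‖ ^ 2 + ‖L v‖ ^ 2 := fun v => by
    simp [hR, inner_add_left, real_inner_smul_left, LinearMap.adjoint_inner_left]
    ring
  have hinj : Function.Injective R := (injective_iff_map_eq_zero R).mpr fun v hv => by
    have h0 := hRv v
    rw [hv, norm_zero] at h0
    have : ‖v‖ ^ 2 = 0 := by linarith [sq_nonneg ‖L v‖, sq_nonneg ‖v‖]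
    simpa using this
  set e := LinearEquiv.ofInjectiveEndo R hinj
  refine ⟨x₀, e.symm, fun x hx hax => ⟨e (x - x₀), ?_, by simp⟩, ?_⟩
  · have hsq := norm_sq_add_norm_sq_eq_of_inner_eq_zero L a hx₀ x
    have h₁ : ‖x‖ ^ 2 ≤ 1 := pow_le_one₀ (norm_nonneg _) hx
    have h₂ : ‖a + L x‖ ^ 2 ≤ 1 := pow_le_one₀ (norm_nonneg _) hax
    rw [mem_closedBall_zero_iff, ← sq_le_one_iff₀ (norm_nonneg _)]
    change ‖R (x - x₀)‖ ^ 2 ≤ 1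
    linarith [hRv (x - x₀), sq_nonneg ‖x₀‖, sq_nonneg ‖a + L x₀‖]
  · have hSR := congrArg LinearMap.det (LinearEquiv.ofInjectiveEndo_left_inv R hinj)
    rw [map_mul, map_one] at hSR
    rw [← hdetR, ← mul_pow, hSR, one_pow]

end InnerProduct

theorem stmt6_general (d : ℕ) (K : Set (EuclideanSpace ℝ (Fin d)))
    (hint : (interior K).Nonempty)
    (hKB : K ⊆ closedBall (0 : EuclideanSpace ℝ (Fin d)) 1)
    (hmin : ∀ (b : EuclideanSpace ℝ (Fin d))
      (S : EuclideanSpace ℝ (Fin d) ≃ₗ[ℝ] EuclideanSpace ℝ (Fin d)),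
      K ⊆ (fun x => b + S x) '' closedBall (0 : EuclideanSpace ℝ (Fin d)) 1 →
      volume (closedBall (0 : EuclideanSpace ℝ (Fin d)) 1) ≤
        volume ((fun x => b + S x) '' closedBall (0 : EuclideanSpace ℝ (Fin d)) 1))
    (a : EuclideanSpace ℝ (Fin d))
    (T : EuclideanSpace ℝ (Fin d) ≃ₗ[ℝ] EuclideanSpace ℝ (Fin d))
    (hK' : (fun x => a + T x) '' K ⊆ closedBall (0 : EuclideanSpace ℝ (Fin d)) 1) :
    volume ((fun x => a + T x) '' K) ≤ volume K ∧
      (volume ((fun x => a + T x) '' K) = volume K →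
        Isometry (fun x : EuclideanSpace ℝ (Fin d) => a + T x)) := by
  set L : EuclideanSpace ℝ (Fin d) →ₗ[ℝ] EuclideanSpace ℝ (Fin d) := T.toLinearMap
  have hvol := addHaar_image_affine volume a L K
  have hdet : |LinearMap.det L| ≤ 1 := by
    have h := one_le_abs_det_of_addHaar_closedBall_le volume
      (hmin (-T.symm a) T.symm fun x hx => ⟨a + T x, hK' ⟨x, hx, rfl⟩, by simp⟩)
    rwa [LinearEquiv.det_coe_symm, abs_inv, one_le_inv₀ (abs_pos.mpr T.isUnit_det'.ne_zero)] at h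
  refine ⟨hvol ▸ mul_le_of_le_one_left' (ENNReal.ofReal_le_one.mpr hdet), fun heq => ?_⟩
  have hK₀ : volume K ≠ 0 := (Measure.measure_pos_of_nonempty_interior volume hint).ne'
  have hK₁ : volume K ≠ ⊤ := ((measure_mono hKB).trans_lt measure_closedBall_lt_top).ne
  have hdet₁ : |LinearMap.det L| = 1 :=
    ENNReal.ofReal_eq_one.mp ((ENNReal.mul_eq_right hK₀ hK₁).mp (hvol ▸ heq))
  obtain ⟨x₀, S, hsub, hdetS⟩ := exists_affine_image_closedBall_superset L a
  have hS := one_le_abs_det_of_addHaar_closedBall_le volume (hmin x₀ S fun x hx =>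
    hsub x (mem_closedBall_zero_iff.mp (hKB hx)) (mem_closedBall_zero_iff.mp (hK' ⟨x, hx, rfl⟩)))
  have hG : LinearMap.adjoint L ∘ₗ L = 1 := by
    refine (LinearMap.isPositive_adjoint_comp_self L).eq_one_of_det_midpoint_sq_le ?_
    rw [← LinearMap.normDet_sq, LinearMap.normDet_eq_abs_det, hdet₁]
    have hS₂ : 1 ≤ LinearMap.det (S : EuclideanSpace ℝ (Fin d) →ₗ[ℝ] _) ^ 2 :=
      (one_le_sq_iff_one_le_abs _).mpr hS
    rw [one_pow]
    refine pow_le_one₀ ?_ ?_ <;> nlinarith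
  exact (isometry_add_left a).comp
    (AddMonoidHomClass.isometry_of_norm L (LinearMap.norm_map_of_adjoint_comp_self_eq_one hG))

/-- Let K be a compact convex subset of B_d with nonempty interior such that
B_d is the minimum volume ellipsoid containing K.  If K' = a + T·K ⊆ B_d is an affine
image of K then vol(K') ≤ vol(K), and if vol(K') = vol(K) then the affine map x ↦ a + T x
is an isometry. -/
theorem stmt6 (d : ℕ) (K : Set (EuclideanSpace ℝ (Fin d)))
    (hKc : IsCompact K) (hconv : Convex ℝ K) (hint : (interior K).Nonempty)
    (hKB : K ⊆ closedBall (0 : EuclideanSpace ℝ (Fin d)) 1)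
    (hmin : ∀ (b : EuclideanSpace ℝ (Fin d))
      (S : EuclideanSpace ℝ (Fin d) ≃ₗ[ℝ] EuclideanSpace ℝ (Fin d)),
      K ⊆ (fun x => b + S x) '' closedBall (0 : EuclideanSpace ℝ (Fin d)) 1 →
      volume (closedBall (0 : EuclideanSpace ℝ (Fin d)) 1) ≤
        volume ((fun x => b + S x) '' closedBall (0 : EuclideanSpace ℝ (Fin d)) 1))
    (a : EuclideanSpace ℝ (Fin d))
    (T : EuclideanSpace ℝ (Fin d) ≃ₗ[ℝ] EuclideanSpace ℝ (Fin d))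
    (hK' : (fun x => a + T x) '' K ⊆ closedBall (0 : EuclideanSpace ℝ (Fin d)) 1) :
    volume ((fun x => a + T x) '' K) ≤ volume K ∧
      (volume ((fun x => a + T x) '' K) = volume K →
        Isometry (fun x : EuclideanSpace ℝ (Fin d) => a + T x)) :=
  stmt6_general d K hint hKB hmin a T hK'
end

section
/- Let M ⊆ ℝ^d be a compact set and K ⊆ ℝ^d a compact set with nonempty interior, and let δ > 0. Then the set S'(M) = {(a, α, A) ∈ ℝ^d × ℝ × SL(d) : a + α·A·K ⊆ M, |α| = 1 + δ} is compact, even though SL(d) is not compact. -/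
/-!
The ball `B(x₀, r) ⊆ K` is mapped by `x ↦ a + α • A x` into `M`, so `α • A` maps `B(0, r)` into
`M - M` and has operator norm at most `2 diam M / r`. Since `|α| = 1 + δ` is bounded away from `0`,
this bounds `A`, and then `a`; the defining conditions are closed, so `S'(M)` is compact.
-/

open Metric Set

section

variable {E F : Type*} [NormedAddCommGroup E] [NormedSpace ℝ E]
  [NormedAddCommGroup F] [NormedSpace ℝ F]

theorem ContinuousLinearMap.opNorm_le_of_forall_ball_norm_le {L : E →L[ℝ] F} {r B : ℝ}
    (hr : 0 < r) (hB : 0 ≤ B) (h : ∀ v ∈ ball (0 : E) r, ‖L v‖ ≤ B) : ‖L‖ ≤ 2 * B / r := by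
  refine L.opNorm_le_of_shell hr (by positivity) (c := (2 : ℝ)) (by norm_num) fun v hv₁ hv₂ => ?_
  rw [Real.norm_two] at hv₁
  calc ‖L v‖ ≤ B := h v (mem_ball_zero_iff.2 hv₂)
    _ = 2 * B / r * (r / 2) := by field_simp
    _ ≤ 2 * B / r * ‖v‖ := by gcongr

theorem ContinuousLinearMap.opNorm_le_of_image_subset {L : E →L[ℝ] F} {K : Set E} {M : Set F}
    {a : F} {x₀ : E} {r : ℝ} (hr : 0 < r) (hball : ball x₀ r ⊆ K) (hM : Bornology.IsBounded M)
    (hLM : (fun x => a + L x) '' K ⊆ M) : ‖L‖ ≤ 2 * diam M / r := by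
  refine L.opNorm_le_of_forall_ball_norm_le hr diam_nonneg fun v hv => ?_
  have hmem : ∀ x ∈ ball x₀ r, a + L x ∈ M := fun x hx => hLM ⟨x, hball hx, rfl⟩
  have hv' : x₀ + v ∈ ball x₀ r := by simpa using hv
  calc ‖L v‖ = dist (a + L (x₀ + v)) (a + L x₀) := by simp [dist_eq_norm]
    _ ≤ diam M := dist_le_diam_of_mem hM (hmem _ hv') (hmem _ (mem_ball_self hr))


theorem isCompact_setOf_abs_eq_and_image_subset [FiniteDimensional ℝ E] [FiniteDimensional ℝ F]
    {M : Set F} {K : Set E} (hM : IsCompact M) (hK : (interior K).Nonempty) {c : ℝ} (hc : 0 < c) :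
    IsCompact {p : F × ℝ × (E →L[ℝ] F) |
      |p.2.1| = c ∧ (fun x => p.1 + p.2.1 • p.2.2 x) '' K ⊆ M} := by
  obtain ⟨x₀, r, hr, hball⟩ : ∃ x₀, ∃ r > 0, ball x₀ r ⊆ K := by
    obtain ⟨x₀, hx₀⟩ := hK
    obtain ⟨r, hr, hball⟩ := isOpen_iff.1 isOpen_interior x₀ hx₀
    exact ⟨x₀, r, hr, hball.trans interior_subset⟩
  obtain ⟨R, hRM⟩ : ∃ R, M ⊆ closedBall 0 R := hM.isBounded.subset_closedBall 0
  set Λ := 2 * diam M / r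
  have hclosed : IsClosed {p : F × ℝ × (E →L[ℝ] F) |
      |p.2.1| = c ∧ (fun x => p.1 + p.2.1 • p.2.2 x) '' K ⊆ M} := by
    simp only [← mapsTo_iff_image_subset, ofPred_and]
    refine (isClosed_eq (by fun_prop) continuous_const).inter
      (hM.isClosed.setOfPred_mapsTo fun _ _ => by fun_prop)
  refine .of_isClosed_subset ((isCompact_closedBall 0 (R + Λ * ‖x₀‖)).prod
    ((isCompact_sphere 0 c).prod (isCompact_closedBall 0 (Λ / c)))) hclosed ?_
  rintro ⟨a, α, L⟩ ⟨hα, hLM⟩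
  have hαL : ‖α • L‖ ≤ Λ := (α • L).opNorm_le_of_image_subset hr hball hM.isBounded hLM
  have hx₀ : a + α • L x₀ ∈ M := hLM ⟨x₀, hball (mem_ball_self hr), rfl⟩
  refine ⟨?_, by simpa using hα, ?_⟩
  · rw [mem_closedBall_zero_iff]
    calc ‖a‖ ≤ ‖a + α • L x₀‖ + ‖(α • L) x₀‖ := norm_le_add_norm_add a (α • L x₀)
      _ ≤ R + Λ * ‖x₀‖ := by
        gcongr
        · simpa using hRM hx₀
        · exact (α • L).le_of_opNorm_le hαL x₀
  · rw [norm_smul, Real.norm_eq_abs, hα] at hαL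
    rw [mem_closedBall_zero_iff, le_div_iff₀ hc, mul_comm]
    exact hαL

end

theorem stmt8_general (d : ℕ) (M K : Set (EuclideanSpace ℝ (Fin d)))
    (hM : IsCompact M) (hint : (interior K).Nonempty)
    (δ : ℝ) (hδ : 0 < δ) :
    IsCompact {p : EuclideanSpace ℝ (Fin d) × ℝ × Matrix (Fin d) (Fin d) ℝ |
      p.2.2.det = 1 ∧ |p.2.1| = 1 + δ ∧
      (fun x => p.1 + p.2.1 • Matrix.toEuclideanLin p.2.2 x) '' K ⊆ M} := by
  let e : Matrix (Fin d) (Fin d) ℝ ≃ₜ (EuclideanSpace ℝ (Fin d) →L[ℝ] EuclideanSpace ℝ (Fin d)) :=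
    Matrix.toEuclideanCLM.toAlgEquiv.toLinearEquiv.toContinuousLinearEquiv.toHomeomorph
  let Φ := (Homeomorph.refl (EuclideanSpace ℝ (Fin d))).prodCongr ((Homeomorph.refl ℝ).prodCongr e)
  have hS₀ := isCompact_setOf_abs_eq_and_image_subset hM hint (by linarith : 0 < 1 + δ)
  -- `Φ ⁻¹'` of the compact set above is, up to defeq of `toEuclideanCLM` and `toEuclideanLin`,
  -- the set of triples satisfying the last two conditions.
  exact (Φ.isCompact_preimage.2 hS₀).inter_left
    (isClosed_eq (continuous_snd.snd.matrix_det) continuous_const)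

/-- For compact M ⊆ ℝ^d, compact K with nonempty interior, and δ > 0, the set
S'(M) = {(a, α, A) ∈ ℝ^d × ℝ × SL(d) : a + α·A·K ⊆ M, |α| = 1 + δ} is compact, even
though SL(d) is not compact. -/
theorem stmt8 (d : ℕ) (hd : 0 < d) (M K : Set (EuclideanSpace ℝ (Fin d)))
    (hM : IsCompact M) (hK : IsCompact K) (hint : (interior K).Nonempty)
    (δ : ℝ) (hδ : 0 < δ) :
    IsCompact {p : EuclideanSpace ℝ (Fin d) × ℝ × Matrix (Fin d) (Fin d) ℝ |
      p.2.2.det = 1 ∧ |p.2.1| = 1 + δ ∧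
      (fun x => p.1 + p.2.1 • Matrix.toEuclideanLin p.2.2 x) '' K ⊆ M} :=
  stmt8_general d M K hM hint δ hδ
end

section
/- Let d ≥ 1 and ε > 0, and let K be a compact convex set in ℝ^d with nonempty interior and volume 1. Then there exists a positive integer n = n(K, ε) such that: if ℱ is a finite family of convex sets in ℝ^d and the intersection of every subfamily of ℱ of size at most n contains a scaled isometric copy of K of volume at least 1, then ⋂ℱ contains a scaled isometric copy of K of volume at least 1 − ε. -/
/-!
Choose `s < 1` with `s ^ d ≥ 1 - ε`. Since `O(d)` is compact and `K` contains a ball, finitely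
many rotations `g₁, …, g_t` suffice so that every isometric copy of `K` scaled by `|α| ≥ 1`
contains a translate of `s • gᵢ(K)` for some `i`. For fixed `i` the admissible translation vectors
`b` with `b + s • gᵢ(K) ⊆ C` form a convex set when `C` is convex, so by Helly's theorem the
property "some translate of `s • gᵢ(K)` fits in `⋂ 𝒢`" has Helly number at most `d + 1`. Helly
numbers are subadditive under disjunction, so the property "some translate of some `s • gᵢ(K)`
fits" has Helly number at most `t (d + 1)`.
-/

open MeasureTheory Metric Set Module Topology
open scoped Pointwise

section HellyNumber

open Finset

variable {α : Type*}

/-- The Helly number of `P` on subfamilies of `F` is at most `n`. -/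
def HellyAt (P : Finset α → Prop) (F : Finset α) (n : ℕ) : Prop :=
  (∀ G ⊆ F, #G ≤ n → P G) → P F

variable {F : Finset α} {m n : ℕ}

theorem HellyAt.or {P Q : Finset α → Prop} (hPa : Antitone P) (hQa : Antitone Q)
    (hP : HellyAt P F m) (hQ : HellyAt Q F n) : HellyAt (fun G => P G ∨ Q G) F (m + n) := by
  classical
  intro h
  by_contra! hF
  obtain ⟨G₁, hG₁F, hG₁, hPG₁⟩ : ∃ G ⊆ F, #G ≤ m ∧ ¬P G := by
    by_contra! h'
    exact hF.1 (hP h')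
  obtain ⟨G₂, hG₂F, hG₂, hQG₂⟩ : ∃ G ⊆ F, #G ≤ n ∧ ¬Q G := by
    by_contra! h'
    exact hF.2 (hQ h')
  rcases h (G₁ ∪ G₂) (union_subset hG₁F hG₂F)
      ((Finset.card_union_le _ _).trans (add_le_add hG₁ hG₂)) with hPG | hQG
  · exact hPG₁ (hPa subset_union_left hPG)
  · exact hQG₂ (hQa subset_union_right hQG)

theorem HellyAt.exists_mem {ι : Type*} (s : Finset ι) {P : ι → Finset α → Prop}
    (hPa : ∀ i, Antitone (P i)) (hP : ∀ i ∈ s, HellyAt (P i) F n) :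
    HellyAt (fun G => ∃ i ∈ s, P i G) F (#s * n) := by
  classical
  induction s using Finset.induction_on with
  | empty => exact fun h => absurd (h ∅ (empty_subset F) (by simp)) (by simp)
  | insert i s hi ih =>
    simp only [Finset.mem_insert, exists_eq_or_imp, forall_eq_or_imp] at hP ⊢
    rw [card_insert_of_notMem hi, add_one_mul, add_comm]
    exact hP.1.or (hPa i) (fun G H hGH ⟨j, hj, hPj⟩ => ⟨j, hj, hPa j hGH hPj⟩) (ih hP.2)

end HellyNumber

theorem antitone_exists_add_image_subset_sInter {X E : Type*} [Add E] (f : X → E) (K : Set X) :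
    Antitone fun G : Finset (Set E) => ∃ b, (fun x => b + f x) '' K ⊆ ⋂₀ ↑G :=
  fun _ _ hGH ⟨b, hb⟩ => ⟨b, hb.trans (sInter_subset_sInter (Finset.coe_subset.2 hGH))⟩

theorem hellyAt_exists_add_image_subset_sInter {X E : Type*} [AddCommGroup E] [Module ℝ E]
    [FiniteDimensional ℝ E] (f : X → E) (K : Set X) {F : Finset (Set E)}
    (hF : ∀ C ∈ F, Convex ℝ C) :
    HellyAt (fun G => ∃ b, (fun x => b + f x) '' K ⊆ ⋂₀ ↑G) F (finrank ℝ E + 1) := by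
  have key : ∀ G : Finset (Set E), (∃ b, (fun x => b + f x) '' K ⊆ ⋂₀ ↑G) ↔
      (⋂ C ∈ G, ⋂ x ∈ K, (· + f x) ⁻¹' C).Nonempty := by
    intro G
    simp only [Set.Nonempty, image_subset_iff, subset_sInter_iff, Finset.mem_coe, mem_iInter₂,
      mem_preimage]
    rfl
  intro h
  rw [key]
  exact Convex.helly_theorem'
    (fun C hC => convex_iInter₂ fun x _ => (hF C hC).translate_preimage_left (f x))
    fun G hGF hG => (key G).1 (h G hGF hG)

theorem Convex.smul_add_smul_mem_of_closedBall_subset {E : Type*} [NormedAddCommGroup E]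
    [NormedSpace ℝ E] {K : Set E} (hK : Convex ℝ K) {x₀ k y : E} {r s : ℝ}
    (hball : closedBall x₀ r ⊆ K) (hk : k ∈ K) (hs0 : 0 ≤ s) (hs1 : s < 1)
    (hy : s * dist y k ≤ (1 - s) * r) : (1 - s) • x₀ + s • y ∈ K := by
  have hs : 0 < 1 - s := sub_pos.2 hs1
  have hz : x₀ + (s / (1 - s)) • (y - k) ∈ K := by
    refine hball (mem_closedBall.2 ?_)
    rw [dist_self_add_left, norm_smul, Real.norm_of_nonneg (by positivity), ← dist_eq_norm,
      div_mul_eq_mul_div, div_le_iff₀ hs, mul_comm r]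
    exact hy
  convert hK hz hk hs.le hs0 (by ring) using 1
  match_scalars <;> field_simp
  ring

section Unitary

variable {E : Type*} [NormedAddCommGroup E] [InnerProductSpace ℝ E] [CompleteSpace E]

theorem dist_star_apply_le {u : E →L[ℝ] E} (hu : u ∈ unitary (E →L[ℝ] E)) (g : E →L[ℝ] E)
    (x : E) : dist (star u (g x)) x ≤ ‖g - u‖ * ‖x‖ := by
  have hux : star u (u x) = x :=
    ContinuousLinearMap.ext_iff.1 (Unitary.star_mul_self_of_mem hu) x
  calc dist (star u (g x)) x = ‖star u (g x - u x)‖ := by rw [map_sub, hux, dist_eq_norm]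
    _ = ‖(g - u) x‖ := (star u).norm_map_of_mem_unitary (Unitary.star_mem hu) _
    _ ≤ ‖g - u‖ * ‖x‖ := (g - u).le_opNorm x

theorem exists_mem_unitary_smul_eq_abs_smul {u : E →L[ℝ] E} (hu : u ∈ unitary (E →L[ℝ] E))
    (α : ℝ) : ∃ v ∈ unitary (E →L[ℝ] E), ∀ x, α • u x = |α| • v x := by
  rcases le_or_gt 0 α with hα | hα
  · exact ⟨u, hu, fun x => by rw [abs_of_nonneg hα]⟩
  · exact ⟨-u, (-(⟨u, hu⟩ : unitary (E →L[ℝ] E))).prop, fun x => by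
      rw [abs_of_neg hα]; exact (neg_smul_neg α (u x)).symm⟩

variable [FiniteDimensional ℝ E]

theorem isCompact_unitary : IsCompact (unitary (E →L[ℝ] E) : Set (E →L[ℝ] E)) := by
  refine Metric.isCompact_of_isClosed_isBounded isClosed_unitary
    ((isBounded_closedBall (x := (0 : E →L[ℝ] E)) (r := 1)).subset fun u hu => ?_)
  exact mem_closedBall_zero_iff.2 <| u.opNorm_le_bound zero_le_one fun x => by
    rw [u.norm_map_of_mem_unitary hu, one_mul]

theorem volume_add_smul_image [MeasurableSpace E] [BorelSpace E] (a : E) (α : ℝ)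
    {u : E →L[ℝ] E} (hu : u ∈ unitary (E →L[ℝ] E)) (K : Set E) :
    volume ((fun x => a + α • u x) '' K) = ENNReal.ofReal (|α| ^ finrank ℝ E) * volume K := by
  let e := Unitary.linearIsometryEquiv ⟨u, hu⟩
  have : (fun x => a + α • u x) '' K = a +ᵥ α • (e '' K) := by
    rw [← Set.image_smul, ← Set.image_vadd, image_image, image_image]; rfl
  rw [this, measure_vadd, Measure.addHaar_smul, abs_pow, e.image_eq_preimage_symm]
  exact congrArg _ <| MeasurePreserving.measure_preimage_equiv
    (f := e.symm.toMeasurableEquiv) e.symm.measurePreserving K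

theorem exists_finset_unitary_add_smul_image_subset {K : Set E} (hKb : Bornology.IsBounded K)
    (hK : Convex ℝ K) (hint : (interior K).Nonempty) {s : ℝ} (hs0 : 0 ≤ s) (hs1 : s < 1) :
    ∃ N : Finset (E →L[ℝ] E), (∀ g ∈ N, g ∈ unitary (E →L[ℝ] E)) ∧
      ∀ (a : E) (α : ℝ), ∀ u ∈ unitary (E →L[ℝ] E), 1 ≤ |α| →
        ∃ g ∈ N, ∃ b, (fun x => b + s • g x) '' K ⊆ (fun x => a + α • u x) '' K := by
  obtain ⟨x₀, hx₀⟩ := hint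
  obtain ⟨r, hr, hball⟩ := nhds_basis_closedBall.mem_iff.1 (mem_interior_iff_mem_nhds.1 hx₀)
  obtain ⟨R, hR, hKR⟩ := hKb.subset_closedBall_lt 0 0
  have hδ : 0 < (1 - s) * r / R := by have := sub_pos.2 hs1; positivity
  obtain ⟨N, hNU, hcover⟩ := (isCompact_unitary (E := E)).elim_nhds_subcover
    (fun g => ball g ((1 - s) * r / R)) fun g _ => ball_mem_nhds g hδ
  refine ⟨N, hNU, fun a α u hu hα => ?_⟩
  obtain ⟨v, hv, huv⟩ := exists_mem_unitary_smul_eq_abs_smul hu α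
  obtain ⟨g, hgN, hgv⟩ := mem_iUnion₂.1 (hcover hv)
  -- `s • g(K)` fits in `v(K)` after a shift by `(1 - s) • v x₀` (the ball around `x₀` absorbs
  -- `g ≈ v`), and `v(K)` fits in `|α| • v(K)` after a shift by `(|α| - 1) • v x₀`.
  refine ⟨g, hgN, a + (|α| - s) • v x₀, ?_⟩
  rintro _ ⟨k, hk, rfl⟩
  have hgvR : ‖g - v‖ * R ≤ (1 - s) * r := by
    rw [← le_div_iff₀ hR, ← dist_eq_norm]
    exact (mem_ball'.1 hgv).le
  have hdist : s * dist (star v (g k)) k ≤ (1 - s) * r := calc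
    s * dist (star v (g k)) k ≤ 1 * (‖g - v‖ * R) := by
      refine mul_le_mul hs1.le ((dist_star_apply_le hv g k).trans ?_) dist_nonneg zero_le_one
      exact mul_le_mul_of_nonneg_left (mem_closedBall_zero_iff.1 (hKR hk)) (norm_nonneg _)
    _ ≤ (1 - s) * r := by rwa [one_mul]
  have hw := hK.smul_add_smul_mem_of_closedBall_subset hball hk hs0 hs1 hdist
  have hα0 : 0 < |α| := by linarith
  refine ⟨|α|⁻¹ • ((1 - s) • x₀ + s • star v (g k)) + (1 - |α|⁻¹) • x₀,
    hK hw (interior_subset hx₀) (by positivity) (sub_nonneg.2 (inv_le_one_of_one_le₀ hα))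
    (by ring), ?_⟩
  have hvv : v (star v (g k)) = g k :=
    ContinuousLinearMap.ext_iff.1 (Unitary.mul_star_self_of_mem hv) (g k)
  change a + α • u _ = a + (|α| - s) • v x₀ + s • g k
  rw [huv]
  simp only [map_add, map_smul, hvv]
  match_scalars <;> field_simp
  ring

end Unitary

theorem exists_pos_lt_one_le_pow {c : ℝ} (hc : c < 1) (n : ℕ) :
    ∃ s : ℝ, 0 < s ∧ s < 1 ∧ c ≤ s ^ n := by
  have hpow : ∀ᶠ s in 𝓝[<] (1 : ℝ), c < s ^ n :=
    (((continuous_pow n).tendsto' 1 1 (one_pow n)).mono_left nhdsWithin_le_nhds).eventually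
      (lt_mem_nhds hc)
  obtain ⟨s, ⟨hs0, hs1⟩, hsn⟩ := (Filter.Eventually.and (Ioo_mem_nhdsLT zero_lt_one) hpow).exists
  exact ⟨s, hs0, hs1, hsn.le⟩

theorem volume_add_smul_toEuclideanLin_image {d : ℕ} (a : EuclideanSpace ℝ (Fin d)) (α : ℝ)
    {A : Matrix (Fin d) (Fin d) ℝ} (hA : A ∈ Matrix.orthogonalGroup (Fin d) ℝ)
    (K : Set (EuclideanSpace ℝ (Fin d))) :
    volume ((fun x => a + α • Matrix.toEuclideanLin A x) '' K) =
      ENNReal.ofReal (|α| ^ d) * volume K := by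
  have := volume_add_smul_image a α (Unitary.map_mem (Matrix.toEuclideanCLM (𝕜 := ℝ)) hA) K
  rwa [finrank_euclideanSpace_fin] at this

/-- For d ≥ 1, ε > 0, and a compact convex K ⊆ ℝ^d with nonempty interior
and volume 1, there is n = n(K, ε) such that: if every subfamily of size ≤ n of a finite
family ℱ of convex sets has intersection containing a scaled isometric copy of K of
volume ≥ 1, then ⋂ℱ contains a scaled isometric copy of K of volume ≥ 1 - ε. -/
theorem stmt12 (d : ℕ) (hd : 1 ≤ d) (ε : ℝ) (hε : 0 < ε)
    (K : Set (EuclideanSpace ℝ (Fin d))) (hKc : IsCompact K) (hconv : Convex ℝ K)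
    (hint : (interior K).Nonempty) (hvol : volume K = 1) :
    ∃ n : ℕ, 0 < n ∧
      ∀ F : Finset (Set (EuclideanSpace ℝ (Fin d))), (∀ C ∈ F, Convex ℝ C) →
        (∀ G ⊆ F, G.card ≤ n →
          ∃ (a : EuclideanSpace ℝ (Fin d)) (α : ℝ),
            ∃ A ∈ Matrix.orthogonalGroup (Fin d) ℝ,
              1 ≤ volume ((fun x => a + α • Matrix.toEuclideanLin A x) '' K) ∧
              (fun x => a + α • Matrix.toEuclideanLin A x) '' K ⊆
                ⋂₀ (G : Set (Set (EuclideanSpace ℝ (Fin d))))) →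
        ∃ (a : EuclideanSpace ℝ (Fin d)) (α : ℝ),
          ∃ A ∈ Matrix.orthogonalGroup (Fin d) ℝ,
            ENNReal.ofReal (1 - ε) ≤ volume ((fun x => a + α • Matrix.toEuclideanLin A x) '' K) ∧
            (fun x => a + α • Matrix.toEuclideanLin A x) '' K ⊆
              ⋂₀ (F : Set (Set (EuclideanSpace ℝ (Fin d)))) := by
  let T : Matrix (Fin d) (Fin d) ℝ ≃⋆ₐ[ℝ] _ := Matrix.toEuclideanCLM
  obtain ⟨s, hs0, hs1, hεs⟩ := exists_pos_lt_one_le_pow (sub_lt_self 1 hε) d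
  obtain ⟨N, hNU, hN⟩ :=
    exists_finset_unitary_add_smul_image_subset hKc.isBounded hconv hint hs0.le hs1
  obtain ⟨g₀, hg₀, -⟩ := hN 0 1 1 (one_mem _) (by simp)
  refine ⟨N.card * (d + 1), Nat.mul_pos (Finset.card_pos.2 ⟨g₀, hg₀⟩) d.succ_pos,
    fun F hF hcopies => ?_⟩
  obtain ⟨g, hgN, b, hb⟩ := HellyAt.exists_mem N
    (fun g => antitone_exists_add_image_subset_sInter (fun x => s • g x) K)
    (fun g _ => hellyAt_exists_add_image_subset_sInter (fun x => s • g x) K hF)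
    fun G hGF hG => by
      rw [finrank_euclideanSpace_fin] at hG
      obtain ⟨a, α, A, hA, hvolG, hsub⟩ := hcopies G hGF hG
      rw [volume_add_smul_toEuclideanLin_image a α hA, hvol, mul_one, ← ENNReal.ofReal_one,
        ENNReal.ofReal_le_ofReal_iff (by positivity),
        one_le_pow_iff_of_nonneg (abs_nonneg α) (by omega)] at hvolG
      obtain ⟨g, hgN, b, hb⟩ := hN a α _ (Unitary.map_mem T hA) hvolG
      exact ⟨g, hgN, b, hb.trans hsub⟩
  have hg : ∀ x, Matrix.toEuclideanLin (T.symm g) x = g x := fun x =>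
    ContinuousLinearMap.ext_iff.1 (T.apply_symm_apply g) x
  refine ⟨b, s, T.symm g, Unitary.map_mem T.symm (hNU g hgN), ?_, ?_⟩
  · rw [volume_add_smul_toEuclideanLin_image b s (Unitary.map_mem T.symm (hNU g hgN)), hvol,
      mul_one, abs_of_pos hs0]
    exact ENNReal.ofReal_le_ofReal hεs
  · simpa only [hg] using hb
end

section
/- Let K be a fixed convex body in ℝ^d, let A₁, ..., A_t ∈ O(d), and for a convex set P define β(K, P) = sup{α ≥ 0 : ∃ a ∈ ℝ^d, ∃ i ∈ {1,...,t}, a + α·Aᵢ·K ⊆ P}. Then for any finite family ℱ of convex sets in ℝ^d (with bounded intersection) there exists a subfamily ℱ' ⊆ ℱ of cardinality at most t(d+1) such that β(K, ⋂ℱ) = β(K, ⋂ℱ'). -/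
open Metric Set

/-- β(K, P): the largest α ≥ 0 such that some translate of α·Aᵢ·K fits inside P, for a
fixed finite list of rotations A₁, …, A_t. -/
noncomputable def betaParam (d t : ℕ) (K : Set (EuclideanSpace ℝ (Fin d)))
    (A : Fin t → Matrix (Fin d) (Fin d) ℝ) (P : Set (EuclideanSpace ℝ (Fin d))) : ℝ :=
  sSup {α : ℝ | 0 ≤ α ∧ ∃ (a : EuclideanSpace ℝ (Fin d)) (i : Fin t),
    (fun x => a + α • Matrix.toEuclideanLin (A i) x) '' K ⊆ P}

/-!
For fixed `α` and `i`, the vectors `a` with `a + α • Aᵢ K ⊆ C` form a convex set, so by Helly's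
theorem, if no translate of `α • Aᵢ K` fits in `⋂ ℱ`, some `d + 1` members of `ℱ` already exclude
every translate; the union over `i` is a subfamily of size at most `t (d + 1)` excluding the scale
`α`. Since `K` is convex, the admissible scales form an interval starting at `0`. So if each of the
finitely many subfamilies of size at most `t (d + 1)` admitted some scale above `β`, the least of
these scales would be an `α > β` excluded by none of them.
-/

open scoped Pointwise
open Module

theorem Convex.setOf_vadd_subset {𝕜 E : Type*} [Semiring 𝕜] [PartialOrder 𝕜]
    [AddCommMonoid E] [Module 𝕜 E] {C : Set E} (hC : Convex 𝕜 C) (L : Set E) :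
    Convex 𝕜 {a : E | a +ᵥ L ⊆ C} := by
  intro a ha b hb s u hs hu hsu
  rintro _ ⟨l, hl, rfl⟩
  have key : s • (a + l) + u • (b + l) = (s • a + u • b) + l := by
    rw [smul_add, smul_add, add_add_add_comm, ← add_smul, hsu, one_smul]
  simpa only [vadd_eq_add, key] using hC (ha ⟨l, hl, rfl⟩) (hb ⟨l, hl, rfl⟩) hs hu hsu

theorem exists_card_le_forall_not_vadd_subset_sInter {𝕜 E : Type*} [Field 𝕜] [LinearOrder 𝕜]
    [IsStrictOrderedRing 𝕜] [AddCommGroup E] [Module 𝕜 E] [FiniteDimensional 𝕜 E]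
    {F : Finset (Set E)} (hF : ∀ C ∈ F, Convex 𝕜 C) {L : Set E} (h : ∀ a : E, ¬ a +ᵥ L ⊆ ⋂₀ ↑F) :
    ∃ G ⊆ F, G.card ≤ finrank 𝕜 E + 1 ∧ ∀ a : E, ¬ a +ᵥ L ⊆ ⋂₀ ↑G := by
  have iff (G : Finset (Set E)) (a : E) :
      a +ᵥ L ⊆ ⋂₀ ↑G ↔ a ∈ ⋂ C ∈ G, {a : E | a +ᵥ L ⊆ C} := by
    simp only [subset_sInter_iff, Finset.mem_coe, mem_iInter, mem_ofPred_eq]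
  by_contra! hsmall
  obtain ⟨a, ha⟩ := Convex.helly_theorem' (𝕜 := 𝕜)
    (fun C hC => (hF C hC).setOf_vadd_subset L) fun G hG hcard => by
      obtain ⟨a, ha⟩ := hsmall G hG hcard
      exact ⟨a, (iff G a).mp ha⟩
  exact h a ((iff F a).mpr ha)

theorem Finset.exists_subset_Iic_of_forall_lt {ι : Type*} {s : Finset ι} (hs : s.Nonempty)
    {S : ι → Set ℝ} {b : ℝ} (hS : ∀ i ∈ s, ∀ x ∈ S i, ∀ y, b < y → y ≤ x → y ∈ S i)
    (h : ∀ y, b < y → ∃ i ∈ s, y ∉ S i) : ∃ i ∈ s, S i ⊆ Set.Iic b := by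
  by_contra! hbig
  simp only [Set.not_subset, Set.mem_Iic, not_le] at hbig
  choose! x hxS hbx using hbig
  have hb_lt : b < s.inf' hs x := (Finset.lt_inf'_iff hs).mpr hbx
  obtain ⟨i, hi, hyS⟩ := h _ hb_lt
  exact hyS (hS i hi (x i) (hxS i hi) _ hb_lt (Finset.inf'_le x hi))

section FitSet

variable {ι E : Type*} [AddCommGroup E] [Module ℝ E]

def fitSet (L : ι → Set E) (P : Set E) : Set ℝ :=
  {α | 0 ≤ α ∧ ∃ (a : E) (i : ι), a +ᵥ α • L i ⊆ P}

variable {L : ι → Set E}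

theorem fitSet_mono {P Q : Set E} (h : P ⊆ Q) : fitSet L P ⊆ fitSet L Q :=
  fun _ ⟨hα, a, i, hsub⟩ => ⟨hα, a, i, hsub.trans h⟩

theorem fitSet_nonneg {P : Set E} {α : ℝ} (h : α ∈ fitSet L P) : 0 ≤ α := h.1

theorem mem_fitSet_of_le (hL : ∀ i, Convex ℝ (L i)) {P : Set E} {α α' : ℝ}
    (h : α' ∈ fitSet L P) (hα : 0 ≤ α) (hle : α ≤ α') : α ∈ fitSet L P := by
  obtain ⟨-, a, i, hsub⟩ := h
  rcases (L i).eq_empty_or_nonempty with hempty | ⟨m, hm⟩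
  · exact ⟨hα, a, i, by simp [hempty]⟩
  -- `α • L i` plus a point of `(α' - α) • L i` lies in `α' • L i`
  refine ⟨hα, a + (α' - α) • m, i, ?_⟩
  rintro _ ⟨_, ⟨l, hl, rfl⟩, rfl⟩
  obtain ⟨z, hz, hzeq⟩ := (hL i).exists_mem_add_smul_eq hl hm hα (sub_nonneg.mpr hle)
  rw [add_sub_cancel] at hzeq
  have : a + α' • z = a + (α' - α) • m + α • l := by rw [hzeq]; abel
  simpa only [vadd_eq_add, this] using hsub ⟨_, ⟨z, hz, rfl⟩, rfl⟩

variable [Fintype ι] [FiniteDimensional ℝ E] {F : Finset (Set E)}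

theorem exists_card_le_notMem_fitSet (hF : ∀ C ∈ F, Convex ℝ C) {α : ℝ} (hα : 0 ≤ α)
    (h : α ∉ fitSet L (⋂₀ ↑F)) :
    ∃ G ⊆ F, G.card ≤ Fintype.card ι * (finrank ℝ E + 1) ∧ α ∉ fitSet L (⋂₀ ↑G) := by
  classical
  have hnot (i : ι) (a : E) : ¬ a +ᵥ α • L i ⊆ ⋂₀ ↑F := fun hsub => h ⟨hα, a, i, hsub⟩
  choose G hGF hGcard hG using fun i => exists_card_le_forall_not_vadd_subset_sInter hF (hnot i)
  refine ⟨Finset.univ.biUnion G, Finset.biUnion_subset.mpr fun i _ => hGF i, ?_, ?_⟩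
  · calc (Finset.univ.biUnion G).card ≤ ∑ i, (G i).card := Finset.card_biUnion_le
      _ ≤ ∑ _i : ι, (finrank ℝ E + 1) := Finset.sum_le_sum fun i _ => hGcard i
      _ = Fintype.card ι * (finrank ℝ E + 1) := by simp
  · rintro ⟨-, a, i, hsub⟩
    exact hG i a (hsub.trans (sInter_subset_sInter (Finset.coe_subset.mpr
      (Finset.subset_biUnion_of_mem G (Finset.mem_univ i)))))

theorem exists_subfamily_fitSet_subset_Iic (hL : ∀ i, Convex ℝ (L i))
    (hF : ∀ C ∈ F, Convex ℝ C) {b : ℝ} (hb : 0 ≤ b) (h : fitSet L (⋂₀ ↑F) ⊆ Iic b) :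
    ∃ G ⊆ F, G.card ≤ Fintype.card ι * (finrank ℝ E + 1) ∧ fitSet L (⋂₀ ↑G) ⊆ Iic b := by
  classical
  obtain ⟨G, hG, hGb⟩ := Finset.exists_subset_Iic_of_forall_lt
    (s := F.powerset.filter (·.card ≤ Fintype.card ι * (finrank ℝ E + 1)))
    ⟨∅, by simp⟩ (S := fun G => fitSet L (⋂₀ ↑G)) (b := b)
    (fun G _ x hx y hby hyx => mem_fitSet_of_le hL hx (hb.trans hby.le) hyx)
    fun y hby => by
      obtain ⟨G, hGF, hGcard, hyG⟩ := exists_card_le_notMem_fitSet hF (hb.trans hby.le)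
        fun hy => (h hy).not_gt hby
      exact ⟨G, by simpa [hGcard] using hGF, hyG⟩
  simp only [Finset.mem_filter, Finset.mem_powerset] at hG
  exact ⟨G, hG.1, hG.2, hGb⟩

theorem exists_subfamily_sSup_fitSet_eq (hL : ∀ i, Convex ℝ (L i)) (hF : ∀ C ∈ F, Convex ℝ C) :
    ∃ G ⊆ F, G.card ≤ Fintype.card ι * (finrank ℝ E + 1) ∧
      sSup (fitSet L (⋂₀ ↑F)) = sSup (fitSet L (⋂₀ ↑G)) := by
  by_cases hbdd : BddAbove (fitSet L (⋂₀ ↑F))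
  · have hβ : 0 ≤ sSup (fitSet L (⋂₀ ↑F)) := Real.sSup_nonneg fun _ => fitSet_nonneg
    obtain ⟨G, hGF, hGcard, hG⟩ :=
      exists_subfamily_fitSet_subset_Iic hL hF hβ fun _ hα => le_csSup hbdd hα
    refine ⟨G, hGF, hGcard, le_antisymm ?_ (Real.sSup_le hG hβ)⟩
    exact Real.sSup_le (fun _ hα => le_csSup ⟨_, hG⟩
      (fitSet_mono (sInter_subset_sInter (Finset.coe_subset.mpr hGF)) hα))
      (Real.sSup_nonneg fun _ => fitSet_nonneg)
  · -- both suprema take the junk value `sSup = 0` of a set unbounded above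
    have hbdd' : ¬ BddAbove (fitSet L (⋂₀ ↑(∅ : Finset (Set E)))) :=
      fun h' => hbdd (h'.mono (fitSet_mono (by simp)))
    exact ⟨∅, Finset.empty_subset F, by simp,
      by rw [Real.sSup_of_not_bddAbove hbdd, Real.sSup_of_not_bddAbove hbdd']⟩

end FitSet

theorem betaParam_eq_sSup_fitSet (d t : ℕ) (K : Set (EuclideanSpace ℝ (Fin d)))
    (A : Fin t → Matrix (Fin d) (Fin d) ℝ) (P : Set (EuclideanSpace ℝ (Fin d))) :
    betaParam d t K A P = sSup (fitSet (fun i => Matrix.toEuclideanLin (A i) '' K) P) := by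
  have himage (a : EuclideanSpace ℝ (Fin d)) (α : ℝ) (i : Fin t) :
      (fun x => a + α • Matrix.toEuclideanLin (A i) x) '' K
        = a +ᵥ α • Matrix.toEuclideanLin (A i) '' K := by
    simp only [← image_smul, ← image_vadd, image_image, vadd_eq_add]
  simp only [betaParam, fitSet, himage]

theorem stmt13_general (d t : ℕ) (K : Set (EuclideanSpace ℝ (Fin d)))
    (hconv : Convex ℝ K)
    (A : Fin t → Matrix (Fin d) (Fin d) ℝ)
    (F : Finset (Set (EuclideanSpace ℝ (Fin d)))) (hF : ∀ C ∈ F, Convex ℝ C) :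
    ∃ F' ⊆ F, F'.card ≤ t * (d + 1) ∧
      betaParam d t K A (⋂₀ (F : Set (Set (EuclideanSpace ℝ (Fin d))))) =
        betaParam d t K A (⋂₀ (F' : Set (Set (EuclideanSpace ℝ (Fin d))))) := by
  simp only [betaParam_eq_sSup_fitSet]
  simpa only [Fintype.card_fin, finrank_euclideanSpace_fin] using
    exists_subfamily_sSup_fitSet_eq (fun i => hconv.linear_image (Matrix.toEuclideanLin (A i))) hF

/-- For a convex body K, rotations A₁,…,A_t ∈ O(d), and a finite family ℱ
of convex sets with bounded intersection, there is a subfamily ℱ' of cardinality at most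
t(d+1) with β(K, ⋂ℱ) = β(K, ⋂ℱ'). -/
theorem stmt13 (d t : ℕ) (K : Set (EuclideanSpace ℝ (Fin d)))
    (hKc : IsCompact K) (hconv : Convex ℝ K) (hint : (interior K).Nonempty)
    (A : Fin t → Matrix (Fin d) (Fin d) ℝ)
    (hA : ∀ i, A i ∈ Matrix.orthogonalGroup (Fin d) ℝ)
    (F : Finset (Set (EuclideanSpace ℝ (Fin d)))) (hF : ∀ C ∈ F, Convex ℝ C)
    (hbdd : Bornology.IsBounded (⋂₀ (F : Set (Set (EuclideanSpace ℝ (Fin d)))))) :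
    ∃ F' ⊆ F, F'.card ≤ t * (d + 1) ∧
      betaParam d t K A (⋂₀ (F : Set (Set (EuclideanSpace ℝ (Fin d))))) =
        betaParam d t K A (⋂₀ (F' : Set (Set (EuclideanSpace ℝ (Fin d))))) :=
  stmt13_general d t K hconv A F hF
end

section
/- Helly's theorem for translates: Let L be a compact convex set in ℝ^d and ℱ a finite family of convex sets in ℝ^d. If for every subfamily 𝒢 ⊆ ℱ with |𝒢| ≤ d+1 there exists a ∈ ℝ^d with a + L ⊆ ⋂𝒢, then there exists a ∈ ℝ^d with a + L ⊆ ⋂ℱ. -/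
open Set

/-! The translation vectors `a` with `a + L ⊆ S` form the set `⋂ x ∈ L, (S - x)`, which is convex
whenever `S` is. Helly's theorem applied to these sets, one for each member of the family, gives
the result. -/

section TranslationsInto

variable {𝕜 E : Type*} [AddCommMonoid E]

def translationsInto (L S : Set E) : Set E := {a | (fun x => a + x) '' L ⊆ S}

theorem translationsInto_eq_iInter (L S : Set E) :
    translationsInto L S = ⋂ x ∈ L, (fun a => a + x) ⁻¹' S := by
  ext a
  simp only [translationsInto, image_subset_iff, mem_iInter₂]
  rfl

theorem Convex.translationsInto [Semiring 𝕜] [PartialOrder 𝕜] [Module 𝕜 E] (L : Set E)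
    {S : Set E} (hS : Convex 𝕜 S) : Convex 𝕜 (translationsInto L S) := by
  rw [translationsInto_eq_iInter]
  exact convex_iInter₂ fun x _ => hS.translate_preimage_left x

theorem image_add_subset_sInter_iff (L : Set E) (G : Set (Set E)) (a : E) :
    (fun x => a + x) '' L ⊆ ⋂₀ G ↔ a ∈ ⋂ S ∈ G, translationsInto L S := by
  simp only [subset_sInter_iff, mem_iInter₂]
  rfl

end TranslationsInto

theorem Convex.helly_theorem_translates {𝕜 E : Type*} [Field 𝕜] [LinearOrder 𝕜]
    [IsStrictOrderedRing 𝕜] [AddCommGroup E] [Module 𝕜 E] [FiniteDimensional 𝕜 E] (L : Set E)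
    {F : Finset (Set E)} (hF : ∀ S ∈ F, Convex 𝕜 S)
    (h : ∀ G ⊆ F, G.card ≤ Module.finrank 𝕜 E + 1 →
      ∃ a : E, (fun x => a + x) '' L ⊆ ⋂₀ (G : Set (Set E))) :
    ∃ a : E, (fun x => a + x) '' L ⊆ ⋂₀ (F : Set (Set E)) := by
  simp only [image_add_subset_sInter_iff, Finset.mem_coe] at h ⊢
  exact Convex.helly_theorem' (fun S hS => (hF S hS).translationsInto L) h

theorem stmt14_general (d : ℕ) (L : Set (EuclideanSpace ℝ (Fin d)))
    (F : Finset (Set (EuclideanSpace ℝ (Fin d)))) (hF : ∀ C ∈ F, Convex ℝ C)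
    (h : ∀ G ⊆ F, G.card ≤ d + 1 →
      ∃ a : EuclideanSpace ℝ (Fin d),
        (fun x => a + x) '' L ⊆ ⋂₀ (G : Set (Set (EuclideanSpace ℝ (Fin d))))) :
    ∃ a : EuclideanSpace ℝ (Fin d),
      (fun x => a + x) '' L ⊆ ⋂₀ (F : Set (Set (EuclideanSpace ℝ (Fin d)))) :=
  Convex.helly_theorem_translates L hF (by simpa using h)

/-- Helly's theorem for translates: If L is a compact convex set in ℝ^d
and ℱ a finite family of convex sets such that every subfamily of size ≤ d+1 has
intersection containing a translate of L, then ⋂ℱ contains a translate of L. -/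
theorem stmt14 (d : ℕ) (L : Set (EuclideanSpace ℝ (Fin d)))
    (hL : IsCompact L) (hLconv : Convex ℝ L)
    (F : Finset (Set (EuclideanSpace ℝ (Fin d)))) (hF : ∀ C ∈ F, Convex ℝ C)
    (h : ∀ G ⊆ F, G.card ≤ d + 1 →
      ∃ a : EuclideanSpace ℝ (Fin d),
        (fun x => a + x) '' L ⊆ ⋂₀ (G : Set (Set (EuclideanSpace ℝ (Fin d))))) :
    ∃ a : EuclideanSpace ℝ (Fin d),
      (fun x => a + x) '' L ⊆ ⋂₀ (F : Set (Set (EuclideanSpace ℝ (Fin d)))) :=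
  stmt14_general d L F hF h
end
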